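/- arXiv:1607.03251 — 7 statements merged into one kernel-verified Lean document; each statement's English description precedes it below -/
import Mathlib

section
/- Fix an integer n ≥ 2. Define the n×n matrix A by A_{i,j} = a_n² λ_{j,n} p_{n-1}(x_{j,n})² λ_{i,n-1} p_n(x_{i,n-1})² / (x_{j,n} − x_{i,n-1})² for 1 ≤ i ≤ n−1 and 1 ≤ j ≤ n, and A_{n,j} = λ_{j,n} p_{n-1}(x_{j,n})² for 1 ≤ j ≤ n. Then A is doubly stochastic, x_{i,n-1} = Σ_{j=1}^{n} A_{i,j} x_{j,n} for every 1 ≤ i ≤ n−1, and b_{n-1} = Σ_{j=1}^{n} A_{n,j} x_{j,n}. -/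
/-!
By Christoffel–Darboux, the kernel `K_N(s, t) = ∑_{k<N} p_k(s) p_k(t)` vanishes at pairs of
distinct zeros of `p_N`, so the square matrix `P = (p_k(ξ_j))`, with `ξ_j` the zeros of `p_N`,
satisfies `Pᵀ P = diag(1/λ_j)`. Hence also `P diag(λ_j) Pᵀ = 1`: the `N`-point Gauss rule
integrates `p_k p_l` exactly for `k, l < N`.

Christoffel–Darboux also rewrites the first `n - 1` rows of `A` as
`A_{ij} = λ_{i,n-1} λ_{j,n} K_{n-1}(x_{i,n-1}, x_{j,n})²`. Row and column sums are then Gauss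
rules applied to `K_{n-1}²`, and the barycentre identity holds because, when `p_{n-1}(y) = 0`,
`(t - y) K_{n-1}(y, t)` is a multiple of `p_{n-1}(t)`, which is orthogonal to `K_{n-1}(y, ·)`.
The last row is the Gauss rule applied to `p_{n-1}²` and to
`t p_{n-1}(t)² = b_{n-1} p_{n-1}(t)² + a_{n-1} p_{n-2}(t) p_{n-1}(t)` at the zeros of `p_n`.
-/

open MeasureTheory Polynomial Finset
open scoped Matrix

namespace Polynomial

theorem eval_ne_zero_of_degree_eq_zero {R : Type*} [Semiring R] {q : R[X]} (hq : q.degree = 0)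
    (t : R) : q.eval t ≠ 0 := by
  rw [eq_C_of_degree_eq_zero hq, eval_C]
  intro h
  rw [eq_C_of_degree_eq_zero hq, h, C_0, degree_zero] at hq
  exact WithBot.bot_ne_zero hq

end Polynomial

theorem strictMonoOn_Icc_of_lt_add_one {α : Type*} [Preorder α] {x : ℕ → α} {N : ℕ}
    (h : ∀ j, 1 ≤ j → j + 1 ≤ N → x j < x (j + 1)) : StrictMonoOn x (Set.Icc 1 N) :=
  strictMonoOn_of_lt_add_one Set.ordConnected_Icc fun j _ hj hj1 => h j hj.1 hj1.2

theorem ne_of_mem_Ioo_of_strictMonoOn_Icc {α : Type*} [Preorder α] {x : ℕ → α} {N i j : ℕ}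
    (hx : StrictMonoOn x (Set.Icc 1 N)) (hj : j ∈ Set.Icc 1 N) (hi : 1 ≤ i) (hiN : i + 1 ≤ N)
    {y : α} (hy : y ∈ Set.Ioo (x i) (x (i + 1))) : x j ≠ y := by
  rcases le_or_gt j i with hji | hij
  · exact ((hx.monotoneOn hj ⟨hi, by omega⟩ hji).trans_lt hy.1).ne
  · exact (hy.2.trans_le (hx.monotoneOn ⟨by omega, hiN⟩ hj hij)).ne'

namespace OrthogonalPolynomials

variable {p : ℕ → ℝ[X]} {a b : ℕ → ℝ} {N : ℕ} {ι : Type*} {J : Finset ι} {ξ : ι → ℝ}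

structure ThreeTermRecurrence (p : ℕ → ℝ[X]) (a b : ℕ → ℝ) : Prop where
  zero : X * p 0 = C (a 1) * p 1 + C (b 0) * p 0
  succ : ∀ m : ℕ, X * p (m + 1) =
    C (a (m + 2)) * p (m + 2) + C (b (m + 1)) * p (m + 1) + C (a (m + 1)) * p m

def kernel (p : ℕ → ℝ[X]) (N : ℕ) (s t : ℝ) : ℝ :=
  ∑ k ∈ range N, (p k).eval s * (p k).eval t

noncomputable def christoffel (p : ℕ → ℝ[X]) (N : ℕ) (t : ℝ) : ℝ :=
  (∑ k ∈ range N, (p k).eval t ^ 2)⁻¹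

noncomputable def kernelWeight (p : ℕ → ℝ[X]) (N : ℕ) (y t : ℝ) : ℝ :=
  christoffel p N y * christoffel p (N + 1) t * kernel p N y t ^ 2

structure IsZeroEnumeration (p : ℕ → ℝ[X]) (N : ℕ) (J : Finset ι) (ξ : ι → ℝ) : Prop where
  injOn : Set.InjOn ξ J
  card_eq : #J = N
  isRoot : ∀ j ∈ J, (p N).eval (ξ j) = 0

theorem isZeroEnumeration_Icc {x : ℕ → ℝ}
    (hroot : ∀ j, 1 ≤ j → j ≤ N → (p N).eval (x j) = 0) (hx : StrictMonoOn x (Set.Icc 1 N)) :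
    IsZeroEnumeration p N (Icc 1 N) x where
  injOn := by rw [coe_Icc]; exact hx.injOn
  card_eq := by simp
  isRoot j hj := hroot j (mem_Icc.1 hj).1 (mem_Icc.1 hj).2

theorem kernel_comm (N : ℕ) (s t : ℝ) : kernel p N s t = kernel p N t s :=
  sum_congr rfl fun _ _ => mul_comm _ _

theorem christoffel_nonneg (N : ℕ) (t : ℝ) : 0 ≤ christoffel p N t :=
  inv_nonneg.2 (sum_nonneg fun _ _ => sq_nonneg _)

theorem kernelWeight_nonneg (N : ℕ) (y t : ℝ) : 0 ≤ kernelWeight p N y t :=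
  mul_nonneg (mul_nonneg (christoffel_nonneg N y) (christoffel_nonneg (N + 1) t)) (sq_nonneg _)

theorem christoffel_mul_sum_sq (hp0 : ∀ t, (p 0).eval t ≠ 0) (hN : 0 < N) (t : ℝ) :
    christoffel p N t * ∑ k ∈ range N, (p k).eval t ^ 2 = 1 :=
  inv_mul_cancel₀ <| ne_of_gt <|
    sum_pos' (fun _ _ => sq_nonneg _) ⟨0, mem_range.2 hN, sq_pos_of_ne_zero (hp0 t)⟩

namespace ThreeTermRecurrence

theorem eval_zero (hp : ThreeTermRecurrence p a b) (t : ℝ) :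
    t * (p 0).eval t = a 1 * (p 1).eval t + b 0 * (p 0).eval t := by
  simpa using congrArg (eval t) hp.zero

theorem eval_succ (hp : ThreeTermRecurrence p a b) (m : ℕ) (t : ℝ) :
    t * (p (m + 1)).eval t = a (m + 2) * (p (m + 2)).eval t + b (m + 1) * (p (m + 1)).eval t +
      a (m + 1) * (p m).eval t := by
  simpa using congrArg (eval t) (hp.succ m)

theorem christoffelDarboux (hp : ThreeTermRecurrence p a b) (N : ℕ) (s t : ℝ) :
    (s - t) * kernel p (N + 1) s t =
      a (N + 1) * ((p (N + 1)).eval s * (p N).eval t - (p N).eval s * (p (N + 1)).eval t) := by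
  induction N with
  | zero =>
    simp only [kernel, zero_add, sum_range_one]
    linear_combination (p 0).eval t * hp.eval_zero s - (p 0).eval s * hp.eval_zero t
  | succ N ih =>
    rw [kernel, sum_range_succ, ← kernel]
    linear_combination
      ih + (p (N + 1)).eval t * hp.eval_succ N s - (p (N + 1)).eval s * hp.eval_succ N t

theorem kernel_eq_zero (hp : ThreeTermRecurrence p a b) {s t : ℝ}
    (hs : (p N).eval s = 0) (ht : (p N).eval t = 0) (hst : s ≠ t) : kernel p N s t = 0 := by
  cases N with
  | zero => simp [kernel]
  | succ N =>
    have h := hp.christoffelDarboux N s t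
    rw [hs, ht, zero_mul, mul_zero, sub_zero, mul_zero] at h
    exact (mul_eq_zero.1 h).resolve_left (sub_ne_zero.2 hst)

theorem sub_mul_kernel (hp : ThreeTermRecurrence p a b) {y : ℝ}
    (hy : (p N).eval y = 0) (t : ℝ) :
    (t - y) * kernel p N y t = -(a (N + 1) * (p (N + 1)).eval y * (p N).eval t) := by
  have h := hp.christoffelDarboux N t y
  rw [kernel, sum_range_succ, ← kernel, kernel_comm, hy] at h
  linear_combination h

theorem sum_christoffel_mul_eval_mul_eval (hp : ThreeTermRecurrence p a b)
    (hp0 : ∀ t, (p 0).eval t ≠ 0) (hξ : IsZeroEnumeration p N J ξ) {k l : ℕ} (hk : k < N)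
    (hl : l < N) :
    ∑ j ∈ J, christoffel p N (ξ j) * ((p k).eval (ξ j) * (p l).eval (ξ j)) =
      if k = l then 1 else 0 := by
  classical
  let P : Matrix (Fin N) J ℝ := Matrix.of fun k j => (p k).eval (ξ j)
  let Q : Matrix (Fin N) J ℝ := Matrix.of fun k j => christoffel p N (ξ j) * (p k).eval (ξ j)
  have hcol : Pᵀ * Q = 1 := by
    ext i j
    simp only [P, Q, Matrix.mul_apply, Matrix.transpose_apply, Matrix.of_apply, Matrix.one_apply]
    have hsum : ∑ k : Fin N, (p k).eval (ξ i) * (christoffel p N (ξ j) * (p k).eval (ξ j)) =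
        christoffel p N (ξ j) * kernel p N (ξ i) (ξ j) := by
      rw [kernel, mul_sum, ← Fin.sum_univ_eq_sum_range]
      exact sum_congr rfl fun _ _ => by ring
    rw [hsum]
    split_ifs with hij
    · subst hij
      have hN : 0 < N := hξ.card_eq ▸ card_pos.2 ⟨i, i.2⟩
      simpa [kernel, sq] using christoffel_mul_sum_sq hp0 hN (ξ i)
    · have hne : ξ i ≠ ξ j := fun h => hij (Subtype.ext (hξ.injOn i.2 j.2 h))
      rw [hp.kernel_eq_zero (hξ.isRoot i i.2) (hξ.isRoot j j.2) hne, mul_zero]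
  have hrow := congrFun (congrFun
    ((Matrix.mul_eq_one_comm_of_equiv (J.equivFinOfCardEq hξ.card_eq)).1 hcol) ⟨k, hk⟩) ⟨l, hl⟩
  simp only [P, Q, Matrix.mul_apply, Matrix.transpose_apply, Matrix.of_apply,
      Matrix.one_apply, Fin.mk.injEq] at hrow
  rw [← hrow, ← sum_coe_sort J]
  exact sum_congr rfl fun j _ => by ring

theorem sum_christoffel_mul_sum_mul_eval (hp : ThreeTermRecurrence p a b)
    (hp0 : ∀ t, (p 0).eval t ≠ 0) (hξ : IsZeroEnumeration p N J ξ) (c : ℕ → ℝ) {d l : ℕ}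
    (hd : d ≤ N) (hl : l < N) :
    ∑ j ∈ J, christoffel p N (ξ j) *
        ((∑ k ∈ range d, c k * (p k).eval (ξ j)) * (p l).eval (ξ j)) =
      if l < d then c l else 0 := by
  calc _ = ∑ k ∈ range d, c k *
        ∑ j ∈ J, christoffel p N (ξ j) * ((p k).eval (ξ j) * (p l).eval (ξ j)) := by
        simp only [mul_sum]
        rw [sum_comm]
        refine sum_congr rfl fun j _ => ?_
        rw [sum_mul, mul_sum]
        exact sum_congr rfl fun _ _ => by ring
    _ = ∑ k ∈ range d, if k = l then c k else 0 := sum_congr rfl fun k hk => by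
        rw [hp.sum_christoffel_mul_eval_mul_eval hp0 hξ ((mem_range.1 hk).trans_le hd) hl,
          mul_ite, mul_one, mul_zero]
    _ = _ := by simp only [sum_ite_eq', mem_range]

theorem sum_christoffel_mul_sum_sq (hp : ThreeTermRecurrence p a b)
    (hp0 : ∀ t, (p 0).eval t ≠ 0) (hξ : IsZeroEnumeration p N J ξ) (c : ℕ → ℝ) {d : ℕ}
    (hd : d ≤ N) :
    ∑ j ∈ J, christoffel p N (ξ j) * (∑ k ∈ range d, c k * (p k).eval (ξ j)) ^ 2 =
      ∑ k ∈ range d, c k ^ 2 := by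
  calc _ = ∑ l ∈ range d, c l * ∑ j ∈ J,
        christoffel p N (ξ j) * ((∑ k ∈ range d, c k * (p k).eval (ξ j)) * (p l).eval (ξ j)) := by
        simp_rw [mul_sum]
        rw [sum_comm]
        refine sum_congr rfl fun j _ => ?_
        rw [sq, mul_sum, mul_sum]
        exact sum_congr rfl fun _ _ => by ring
    _ = _ := sum_congr rfl fun l hl => by
        rw [hp.sum_christoffel_mul_sum_mul_eval hp0 hξ c hd ((mem_range.1 hl).trans_le hd),
          if_pos (mem_range.1 hl), sq]

theorem sum_christoffel_mul_eval_sq (hp : ThreeTermRecurrence p a b)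
    (hp0 : ∀ t, (p 0).eval t ≠ 0) (hξ : IsZeroEnumeration p (N + 1) J ξ) :
    ∑ j ∈ J, christoffel p (N + 1) (ξ j) * (p N).eval (ξ j) ^ 2 = 1 := by
  simpa [sq] using hp.sum_christoffel_mul_eval_mul_eval hp0 hξ N.lt_succ_self N.lt_succ_self

theorem sum_christoffel_mul_eval_sq_mul (hp : ThreeTermRecurrence p a b)
    (hp0 : ∀ t, (p 0).eval t ≠ 0) {m : ℕ} (hξ : IsZeroEnumeration p (m + 2) J ξ) :
    ∑ j ∈ J, christoffel p (m + 2) (ξ j) * (p (m + 1)).eval (ξ j) ^ 2 * ξ j = b (m + 1) := by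
  have hnode : ∀ j ∈ J, christoffel p (m + 2) (ξ j) * (p (m + 1)).eval (ξ j) ^ 2 * ξ j =
      b (m + 1) *
          (christoffel p (m + 2) (ξ j) * ((p (m + 1)).eval (ξ j) * (p (m + 1)).eval (ξ j))) +
        a (m + 1) *
          (christoffel p (m + 2) (ξ j) * ((p m).eval (ξ j) * (p (m + 1)).eval (ξ j))) := by
    intro j hj
    linear_combination (christoffel p (m + 2) (ξ j) * (p (m + 1)).eval (ξ j)) *
      (hp.eval_succ m (ξ j) + a (m + 2) * hξ.isRoot j hj)
  rw [sum_congr rfl hnode, sum_add_distrib, ← mul_sum, ← mul_sum,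
    hp.sum_christoffel_mul_eval_mul_eval hp0 hξ (by omega) (by omega),
    hp.sum_christoffel_mul_eval_mul_eval hp0 hξ (by omega) (by omega)]
  simp

theorem kernelWeight_eq (hp : ThreeTermRecurrence p a b) {y t : ℝ} (hy : (p N).eval y = 0)
    (hty : t ≠ y) :
    kernelWeight p N y t = a (N + 1) ^ 2 * christoffel p (N + 1) t * (p N).eval t ^ 2 *
      christoffel p N y * (p (N + 1)).eval y ^ 2 / (t - y) ^ 2 := by
  have h := hp.sub_mul_kernel hy t
  rw [eq_div_iff (pow_ne_zero 2 (sub_ne_zero.2 hty)), kernelWeight]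
  linear_combination christoffel p N y * christoffel p (N + 1) t *
    ((t - y) * kernel p N y t - a (N + 1) * (p (N + 1)).eval y * (p N).eval t) * h

theorem sum_kernelWeight_right (hp : ThreeTermRecurrence p a b)
    (hp0 : ∀ t, (p 0).eval t ≠ 0) (hN : 0 < N) (hξ : IsZeroEnumeration p (N + 1) J ξ) (y : ℝ) :
    ∑ j ∈ J, kernelWeight p N y (ξ j) = 1 := by
  have h : ∑ j ∈ J, christoffel p (N + 1) (ξ j) * kernel p N y (ξ j) ^ 2 =
      ∑ k ∈ range N, (p k).eval y ^ 2 :=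
    hp.sum_christoffel_mul_sum_sq hp0 hξ (fun k => (p k).eval y) N.le_succ
  simp only [kernelWeight, mul_assoc, ← mul_sum]
  rw [h, christoffel_mul_sum_sq hp0 hN y]

theorem sum_kernelWeight_mul_right (hp : ThreeTermRecurrence p a b)
    (hp0 : ∀ t, (p 0).eval t ≠ 0) (hN : 0 < N) (hξ : IsZeroEnumeration p (N + 1) J ξ) {y : ℝ}
    (hy : (p N).eval y = 0) :
    ∑ j ∈ J, kernelWeight p N y (ξ j) * ξ j = y := by
  have hmoment :
      ∑ j ∈ J, christoffel p (N + 1) (ξ j) * ((ξ j - y) * kernel p N y (ξ j) ^ 2) = 0 :=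
    calc _ = -(a (N + 1) * (p (N + 1)).eval y) * ∑ j ∈ J,
          christoffel p (N + 1) (ξ j) * (kernel p N y (ξ j) * (p N).eval (ξ j)) := by
          rw [mul_sum]
          exact sum_congr rfl fun j _ => by
            linear_combination christoffel p (N + 1) (ξ j) * kernel p N y (ξ j) *
              hp.sub_mul_kernel hy (ξ j)
      _ = 0 := by
          simp only [kernel]
          rw [hp.sum_christoffel_mul_sum_mul_eval hp0 hξ _ N.le_succ N.lt_succ_self,
            if_neg N.lt_irrefl, mul_zero]
  calc _ = y * ∑ j ∈ J, kernelWeight p N y (ξ j) + christoffel p N y *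
        ∑ j ∈ J, christoffel p (N + 1) (ξ j) * ((ξ j - y) * kernel p N y (ξ j) ^ 2) := by
        rw [mul_sum, mul_sum, ← sum_add_distrib]
        exact sum_congr rfl fun j _ => by rw [kernelWeight]; ring
    _ = y := by rw [hp.sum_kernelWeight_right hp0 hN hξ, hmoment]; ring

theorem sum_kernelWeight_left_add (hp : ThreeTermRecurrence p a b)
    (hp0 : ∀ t, (p 0).eval t ≠ 0) (hξ : IsZeroEnumeration p N J ξ) (t : ℝ) :
    ∑ i ∈ J, kernelWeight p N (ξ i) t + christoffel p (N + 1) t * (p N).eval t ^ 2 = 1 := by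
  have h : ∑ i ∈ J, christoffel p N (ξ i) * kernel p N t (ξ i) ^ 2 =
      ∑ k ∈ range N, (p k).eval t ^ 2 :=
    hp.sum_christoffel_mul_sum_sq hp0 hξ (fun k => (p k).eval t) le_rfl
  calc _ = christoffel p (N + 1) t *
        (∑ i ∈ J, christoffel p N (ξ i) * kernel p N t (ξ i) ^ 2 + (p N).eval t ^ 2) := by
        rw [mul_add, mul_sum]
        congr 1
        exact sum_congr rfl fun i _ => by rw [kernelWeight, kernel_comm]; ring
    _ = 1 := by rw [h, ← sum_range_succ, christoffel_mul_sum_sq hp0 N.succ_pos]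

end ThreeTermRecurrence

end OrthogonalPolynomials

open OrthogonalPolynomials

theorem stmt_0_general
    (p : ℕ → Polynomial ℝ)
    (hdeg : ∀ m : ℕ, (p m).degree = m)
    (a b : ℕ → ℝ)
    (hrec0 : Polynomial.X * p 0 = Polynomial.C (a 1) * p 1 + Polynomial.C (b 0) * p 0)
    (hrec : ∀ m : ℕ, Polynomial.X * p (m + 1) =
      Polynomial.C (a (m + 2)) * p (m + 2) + Polynomial.C (b (m + 1)) * p (m + 1) +
        Polynomial.C (a (m + 1)) * p m)
    (x : ℕ → ℕ → ℝ)
    (hxroot : ∀ m j : ℕ, 1 ≤ j → j ≤ m → (p m).eval (x m j) = 0)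
    (hxmono : ∀ m j : ℕ, 1 ≤ j → j + 1 ≤ m → x m j < x m (j + 1))
    (hxint : ∀ m j : ℕ, 1 ≤ j → j + 1 ≤ m → x m j < x (m - 1) j ∧ x (m - 1) j < x m (j + 1))
    (lam : ℕ → ℕ → ℝ)
    (hlam : ∀ m j : ℕ, lam m j = (∑ i ∈ Finset.range m, ((p i).eval (x m j)) ^ 2)⁻¹)
    (n : ℕ) (hn : 2 ≤ n)
    (A : ℕ → ℕ → ℝ)
    (hA1 : ∀ i j : ℕ, 1 ≤ i → i ≤ n - 1 → 1 ≤ j → j ≤ n →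
      A i j = a n ^ 2 * lam n j * ((p (n - 1)).eval (x n j)) ^ 2 * lam (n - 1) i *
        ((p n).eval (x (n - 1) i)) ^ 2 / (x n j - x (n - 1) i) ^ 2)
    (hA2 : ∀ j : ℕ, 1 ≤ j → j ≤ n → A n j = lam n j * ((p (n - 1)).eval (x n j)) ^ 2) :
    (∀ i j : ℕ, 1 ≤ i → i ≤ n → 1 ≤ j → j ≤ n → 0 ≤ A i j) ∧
    (∀ i : ℕ, 1 ≤ i → i ≤ n → ∑ j ∈ Finset.Icc 1 n, A i j = 1) ∧
    (∀ j : ℕ, 1 ≤ j → j ≤ n → ∑ i ∈ Finset.Icc 1 n, A i j = 1) ∧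
    (∀ i : ℕ, 1 ≤ i → i ≤ n - 1 → x (n - 1) i = ∑ j ∈ Finset.Icc 1 n, A i j * x n j) ∧
    b (n - 1) = ∑ j ∈ Finset.Icc 1 n, A n j * x n j := by
  obtain ⟨m, rfl⟩ : ∃ m, n = m + 2 := ⟨n - 2, by omega⟩
  obtain rfl : lam = fun k j => christoffel p k (x k j) := funext₂ hlam
  simp only [show m + 2 - 1 = m + 1 from rfl] at hA1 hA2 ⊢
  have hp : ThreeTermRecurrence p a b := ⟨hrec0, hrec⟩
  have hp0 := eval_ne_zero_of_degree_eq_zero (by simpa using hdeg 0)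
  have hx k : StrictMonoOn (x k) (Set.Icc 1 k) := strictMonoOn_Icc_of_lt_add_one (hxmono k)
  have hS := isZeroEnumeration_Icc (hxroot (m + 2)) (hx (m + 2))
  have hR := isZeroEnumeration_Icc (hxroot (m + 1)) (hx (m + 1))
  have hA i j (hi : 1 ≤ i) (hi' : i ≤ m + 1) (hj : j ∈ Icc 1 (m + 2)) :
      A i j = kernelWeight p (m + 1) (x (m + 1) i) (x (m + 2) j) := by
    rw [hA1 i j hi hi' (mem_Icc.1 hj).1 (mem_Icc.1 hj).2, hp.kernelWeight_eq (hxroot _ i hi hi')]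
    exact ne_of_mem_Ioo_of_strictMonoOn_Icc (hx (m + 2)) (mem_Icc.1 hj) hi (by omega)
      (hxint (m + 2) i hi (by omega))
  have hA' j (hj : j ∈ Icc 1 (m + 2)) := hA2 j (mem_Icc.1 hj).1 (mem_Icc.1 hj).2
  refine ⟨fun i j hi hi' hj hj' => ?_, fun i hi hi' => ?_, fun j hj hj' => ?_,
    fun i hi hi' => ?_, ?_⟩
  · obtain hi' | rfl := hi'.lt_or_eq
    · exact hA i j hi (by omega) (mem_Icc.2 ⟨hj, hj'⟩) ▸ kernelWeight_nonneg _ _ _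
    · exact hA2 j hj hj' ▸ mul_nonneg (christoffel_nonneg _ _) (sq_nonneg _)
  · obtain hi' | rfl := hi'.lt_or_eq
    · rw [sum_congr rfl (hA i · hi (by omega))]
      exact hp.sum_kernelWeight_right hp0 m.succ_pos hS _
    · exact sum_congr rfl hA' ▸ hp.sum_christoffel_mul_eval_sq hp0 hS
  · rw [sum_Icc_succ_top (by omega), hA2 j hj hj',
      sum_congr rfl fun i hi => hA i j (mem_Icc.1 hi).1 (mem_Icc.1 hi).2 (mem_Icc.2 ⟨hj, hj'⟩)]
    exact hp.sum_kernelWeight_left_add hp0 hR _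
  · rw [sum_congr rfl fun j hj => congrArg (· * x (m + 2) j) (hA i j hi hi' hj)]
    exact (hp.sum_kernelWeight_mul_right hp0 m.succ_pos hS (hxroot _ i hi hi')).symm
  · rw [sum_congr rfl fun j hj => congrArg (· * x (m + 2) j) (hA' j hj)]
    exact (hp.sum_christoffel_mul_eval_sq_mul hp0 hS).symm

theorem stmt_0
    (μ : Measure ℝ) [IsProbabilityMeasure μ]
    (lo hi : ℝ)
    (hsupp : μ (Set.Icc lo hi)ᶜ = 0)
    (hinf : ∀ s : Finset ℝ, μ (↑s : Set ℝ)ᶜ ≠ 0)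
    (p : ℕ → Polynomial ℝ)
    (hdeg : ∀ m : ℕ, (p m).degree = m)
    (hlead : ∀ m : ℕ, 0 < (p m).leadingCoeff)
    (horth : ∀ m l : ℕ, ∫ t, (p m).eval t * (p l).eval t ∂μ = if m = l then 1 else 0)
    (a b : ℕ → ℝ)
    (hapos : ∀ m : ℕ, 1 ≤ m → 0 < a m)
    (hrec0 : Polynomial.X * p 0 = Polynomial.C (a 1) * p 1 + Polynomial.C (b 0) * p 0)
    (hrec : ∀ m : ℕ, Polynomial.X * p (m + 1) =
      Polynomial.C (a (m + 2)) * p (m + 2) + Polynomial.C (b (m + 1)) * p (m + 1) +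
        Polynomial.C (a (m + 1)) * p m)
    (x : ℕ → ℕ → ℝ)
    (hxroot : ∀ m j : ℕ, 1 ≤ j → j ≤ m → (p m).eval (x m j) = 0)
    (hxmono : ∀ m j : ℕ, 1 ≤ j → j + 1 ≤ m → x m j < x m (j + 1))
    (hxint : ∀ m j : ℕ, 1 ≤ j → j + 1 ≤ m → x m j < x (m - 1) j ∧ x (m - 1) j < x m (j + 1))
    (lam : ℕ → ℕ → ℝ)
    (hlam : ∀ m j : ℕ, lam m j = (∑ i ∈ Finset.range m, ((p i).eval (x m j)) ^ 2)⁻¹)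
    (n : ℕ) (hn : 2 ≤ n)
    (A : ℕ → ℕ → ℝ)
    (hA1 : ∀ i j : ℕ, 1 ≤ i → i ≤ n - 1 → 1 ≤ j → j ≤ n →
      A i j = a n ^ 2 * lam n j * ((p (n - 1)).eval (x n j)) ^ 2 * lam (n - 1) i *
        ((p n).eval (x (n - 1) i)) ^ 2 / (x n j - x (n - 1) i) ^ 2)
    (hA2 : ∀ j : ℕ, 1 ≤ j → j ≤ n → A n j = lam n j * ((p (n - 1)).eval (x n j)) ^ 2) :
    (∀ i j : ℕ, 1 ≤ i → i ≤ n → 1 ≤ j → j ≤ n → 0 ≤ A i j) ∧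
    (∀ i : ℕ, 1 ≤ i → i ≤ n → ∑ j ∈ Finset.Icc 1 n, A i j = 1) ∧
    (∀ j : ℕ, 1 ≤ j → j ≤ n → ∑ i ∈ Finset.Icc 1 n, A i j = 1) ∧
    (∀ i : ℕ, 1 ≤ i → i ≤ n - 1 → x (n - 1) i = ∑ j ∈ Finset.Icc 1 n, A i j * x n j) ∧
    b (n - 1) = ∑ j ∈ Finset.Icc 1 n, A n j * x n j :=
  stmt_0_general p hdeg a b hrec0 hrec x hxroot hxmono hxint lam hlam n hn A hA1 hA2
end

section
/- Fix an integer n ≥ 2 and let f : ℝ → ℝ be convex on the interval [a,b]. Then Σ_{i=1}^{n-1} f(x_{i,n-1}) + f(b_{n-1}) ≤ Σ_{j=1}^{n} f(x_{j,n}). (Here all the zeros x_{i,n-1}, x_{j,n} lie in (a,b) and b_{n-1} lies in [a,b].) -/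
/-!
Comparing the coefficients of `X ^ n` and `X ^ (n - 1)` in the recurrence
`X p_{n-1} = a_n p_n + b_{n-1} p_{n-1} + a_{n-1} p_{n-2}` gives the trace identity
`∑ j, x_{j,n} = ∑ i, x_{i,n-1} + b_{n-1}`; together with the interlacing it puts `c = b_{n-1}`
strictly between `x_{1,n}` and `x_{n,n}`. By the trace identity, subtracting a supporting line of
`f` at `c` changes both sides by the same amount, and leaves a convex `φ` minimal at `c`, hence
decreasing left of `c` and increasing right of it. With `ψ = φ - φ c ≥ 0` the claim becomes
`∑ i, ψ (x_{i,n-1}) ≤ ∑ j, ψ (x_{j,n})`, and `ψ (x_{i,n-1})` is at most `ψ (x_{i,n})` if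
`x_{i,n-1} ≤ c` and at most `ψ (x_{i+1,n})` otherwise. Splitting `ψ` into its parts left and right
of `c`, each `x_{j,n}` is charged at most once by each part.
-/

open MeasureTheory Polynomial Finset

theorem Finset.sum_Icc_one_eq_sum_range {M : Type*} [AddCommMonoid M] (F : ℕ → M) (m : ℕ) :
    ∑ j ∈ Icc 1 m, F j = ∑ j ∈ range m, F (j + 1) := by
  rw [range_eq_Ico, sum_Ico_add' F 0 m 1, zero_add, Ico_add_one_right_eq_Icc]

namespace Polynomial

variable {K : Type*} [Field K]

theorem sum_eq_neg_nextCoeff_div_leadingCoeff {ι : Type*} {p : K[X]} (hp : p ≠ 0)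
    {s : Finset ι} {x : ι → K} (hx : Set.InjOn x s) (hcard : s.card = p.natDegree)
    (hroot : ∀ i ∈ s, p.IsRoot (x i)) :
    ∑ i ∈ s, x i = -p.nextCoeff / p.leadingCoeff := by
  classical
  have hsub : (s.image x).val ≤ p.roots :=
    (Multiset.le_iff_subset (s.image x).nodup).2 fun r hr => by
      obtain ⟨i, hi, rfl⟩ := mem_image.1 hr
      exact (mem_roots hp).2 (hroot i hi)
  have hroots : (s.image x).val = p.roots := Multiset.eq_of_le_of_card_le hsub <| by
    rw [card_val, card_image_of_injOn hx, hcard]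
    exact card_roots' p
  have hsplit : p.Splits := by
    rw [splits_iff_card_roots, ← hroots, card_val, card_image_of_injOn hx, hcard]
  have hsum : p.roots.sum = ∑ i ∈ s, x i := by
    rw [← hroots, sum_val]
    exact sum_image hx
  rw [hsplit.nextCoeff_eq_neg_sum_roots_mul_leadingCoeff, hsum]
  field_simp [leadingCoeff_ne_zero.2 hp]

theorem nextCoeff_div_leadingCoeff_of_three_term {p q r : K[X]} {m : ℕ} {α β γ : K}
    (hp : p.natDegree = m + 2) (hq : q.natDegree = m + 1) (hr : r.natDegree ≤ m)
    (h : X * q = C α * p + C β * q + C γ * r) :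
    q.nextCoeff / q.leadingCoeff = p.nextCoeff / p.leadingCoeff + β := by
  have hp0 : p.coeff (m + 2) ≠ 0 := by
    rw [← hp]; exact leadingCoeff_ne_zero.2 (ne_zero_of_natDegree_gt (n := 0) (by omega))
  have hq0 : q.coeff (m + 1) ≠ 0 := by
    rw [← hq]; exact leadingCoeff_ne_zero.2 (ne_zero_of_natDegree_gt (n := 0) (by omega))
  have hcoeff (i : ℕ) := congrArg (coeff · (i + 1)) h
  simp only [coeff_add, coeff_C_mul, coeff_X_mul] at hcoeff
  have htop : q.coeff (m + 1) = α * p.coeff (m + 2) := by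
    simpa [coeff_eq_zero_of_natDegree_lt (by omega : r.natDegree < m + 2),
      coeff_eq_zero_of_natDegree_lt (by omega : q.natDegree < m + 2)] using hcoeff (m + 1)
  have hnext : q.coeff m = α * p.coeff (m + 1) + β * q.coeff (m + 1) := by
    simpa [coeff_eq_zero_of_natDegree_lt (by omega : r.natDegree < m + 1)] using hcoeff m
  rw [nextCoeff_of_natDegree_pos (by omega), nextCoeff_of_natDegree_pos (by omega),
    leadingCoeff, leadingCoeff, hp, hq, show m + 2 - 1 = m + 1 by omega, Nat.add_sub_cancel]
  field_simp
  linear_combination p.coeff (m + 2) * hnext - p.coeff (m + 1) * htop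

end Polynomial

section Interlacing

variable {n : ℕ} {x y : ℕ → ℝ}

theorem sum_sub_sum_mem_Ioo_of_interlace (hn : 0 < n)
    (hxy : ∀ i < n, x i < y i ∧ y i < x (i + 1)) :
    ∑ j ∈ range (n + 1), x j - ∑ i ∈ range n, y i ∈ Set.Ioo (x 0) (x n) := by
  have hne : (range n).Nonempty := nonempty_range_iff.2 hn.ne'
  have hleft : 0 < ∑ i ∈ range n, (x (i + 1) - y i) :=
    sum_pos (fun i hi => sub_pos.2 (hxy i (mem_range.1 hi)).2) hne
  have hright : 0 < ∑ i ∈ range n, (y i - x i) :=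
    sum_pos (fun i hi => sub_pos.2 (hxy i (mem_range.1 hi)).1) hne
  rw [sum_sub_distrib] at hleft hright
  constructor
  · rw [sum_range_succ']; linarith
  · rw [sum_range_succ]; linarith

theorem IsMinOn.sum_add_le_sum_of_interlace {S : Set ℝ} {φ : ℝ → ℝ} {c : ℝ}
    (hmin : IsMinOn φ S c) (hanti : AntitoneOn φ (S ∩ Set.Iic c))
    (hmono : MonotoneOn φ (S ∩ Set.Ici c)) (hx : ∀ j ≤ n, x j ∈ S) (hy : ∀ i < n, y i ∈ S)
    (hxy : ∀ i < n, x i ≤ y i ∧ y i ≤ x (i + 1)) :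
    ∑ i ∈ range n, φ (y i) + φ c ≤ ∑ j ∈ range (n + 1), φ (x j) := by
  set L : ℝ → ℝ := fun t => if t ≤ c then φ t - φ c else 0
  set R : ℝ → ℝ := fun t => if t ≤ c then 0 else φ t - φ c
  have hsplit (t : ℝ) : L t + R t = φ t - φ c := by
    simp only [L, R]; split_ifs <;> ring
  have hL : ∀ j ≤ n, 0 ≤ L (x j) := fun j hj => by
    have : φ c ≤ φ (x j) := hmin (hx j hj)
    simp only [L]; split_ifs <;> linarith
  have hR : ∀ j ≤ n, 0 ≤ R (x j) := fun j hj => by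
    have : φ c ≤ φ (x j) := hmin (hx j hj)
    simp only [R]; split_ifs <;> linarith
  have hstep : ∀ i ∈ range n, φ (y i) - φ c ≤ L (x i) + R (x (i + 1)) := by
    intro i hi
    replace hi := mem_range.1 hi
    obtain ⟨hxy₁, hxy₂⟩ := hxy i hi
    by_cases hyc : y i ≤ c
    · have := hanti ⟨hx i hi.le, hxy₁.trans hyc⟩ ⟨hy i hi, hyc⟩ hxy₁
      have := hR (i + 1) hi
      simp only [L, if_pos (hxy₁.trans hyc)]; linarith
    · replace hyc := not_le.1 hyc
      have := hmono ⟨hy i hi, hyc.le⟩ ⟨hx (i + 1) hi, hyc.le.trans hxy₂⟩ hxy₂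
      have := hL i hi.le
      simp only [R, if_neg (not_le.2 (hyc.trans_le hxy₂))]; linarith
  calc ∑ i ∈ range n, φ (y i) + φ c
      = ∑ i ∈ range n, (φ (y i) - φ c) + (n + 1) * φ c := by
        rw [sum_sub_distrib, sum_const, card_range, nsmul_eq_mul]; ring
    _ ≤ ∑ i ∈ range n, (L (x i) + R (x (i + 1))) + (n + 1) * φ c := by
        gcongr with i hi; exact hstep i hi
    _ ≤ ∑ j ∈ range (n + 1), (L (x j) + R (x j)) + (n + 1) * φ c := by
        rw [sum_add_distrib, sum_add_distrib, sum_range_succ, sum_range_succ' (fun j => R (x j))]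
        linarith [hL n le_rfl, hR 0 (Nat.zero_le n)]
    _ = ∑ j ∈ range (n + 1), φ (x j) := by
        simp only [hsplit, sum_sub_distrib, sum_const, card_range, nsmul_eq_mul]
        push_cast; ring

end Interlacing

namespace ConvexOn

section Unimodal

variable {𝕜 β : Type*} [Field 𝕜] [LinearOrder 𝕜] [IsStrictOrderedRing 𝕜] [AddCommMonoid β]
  [LinearOrder β] [IsOrderedCancelAddMonoid β] [Module 𝕜 β] [PosSMulStrictMono 𝕜 β]
  {S : Set 𝕜} {φ : 𝕜 → β} {c : 𝕜}

theorem antitoneOn_inter_Iic_of_isMinOn (hφ : ConvexOn 𝕜 S φ) (hc : c ∈ S)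
    (hmin : IsMinOn φ S c) : AntitoneOn φ (S ∩ Set.Iic c) := by
  rintro s ⟨hs, -⟩ t ⟨-, htc⟩ hst
  rcases htc.eq_or_lt with rfl | htc
  · exact hmin hs
  · exact hφ.le_left_of_right_le'' hs hc hst htc
      (hmin (hφ.1.ordConnected.out hs hc ⟨hst, htc.le⟩))

theorem monotoneOn_inter_Ici_of_isMinOn (hφ : ConvexOn 𝕜 S φ) (hc : c ∈ S)
    (hmin : IsMinOn φ S c) : MonotoneOn φ (S ∩ Set.Ici c) := by
  rintro s ⟨-, hcs⟩ t ⟨ht, -⟩ hst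
  rcases hcs.eq_or_lt with rfl | hcs
  · exact hmin ht
  · exact hφ.le_right_of_left_le'' hc ht hcs hst
      (hmin (hφ.1.ordConnected.out hc ht ⟨hcs.le, hst⟩))

end Unimodal

variable {S : Set ℝ} {f : ℝ → ℝ} {c : ℝ}

theorem isMinOn_sub_rightDeriv_mul (hf : ConvexOn ℝ S f) (hc : c ∈ interior S) :
    IsMinOn (fun t => f t - derivWithin f (Set.Ioi c) c * t) S c := by
  intro t ht
  show f c - _ * c ≤ f t - _ * t
  rcases lt_trichotomy t c with htc | rfl | hct
  · have h := (hf.slope_le_leftDeriv_of_mem_interior ht hc htc).trans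
      (hf.leftDeriv_le_rightDeriv_of_mem_interior hc)
    rw [slope_def_field, div_le_iff₀ (sub_pos.2 htc)] at h
    linarith
  · exact le_rfl
  · have h := hf.rightDeriv_le_slope_of_mem_interior hc ht hct
    rw [slope_def_field, le_div_iff₀ (sub_pos.2 hct)] at h
    linarith

theorem sum_add_le_sum_of_interlace (hf : ConvexOn ℝ S f) (hc : c ∈ interior S) {n : ℕ}
    {x y : ℕ → ℝ} (hx : ∀ j ≤ n, x j ∈ S) (hy : ∀ i < n, y i ∈ S)
    (hxy : ∀ i < n, x i ≤ y i ∧ y i ≤ x (i + 1))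
    (hsum : ∑ j ∈ range (n + 1), x j = ∑ i ∈ range n, y i + c) :
    ∑ i ∈ range n, f (y i) + f c ≤ ∑ j ∈ range (n + 1), f (x j) := by
  set g := derivWithin f (Set.Ioi c) c
  have hφ : ConvexOn ℝ S (fun t => f t - g * t) :=
    hf.sub ((LinearMap.mulLeft ℝ g).concaveOn hf.1)
  have hmin := hf.isMinOn_sub_rightDeriv_mul hc
  have hcS := interior_subset hc
  have key := hmin.sum_add_le_sum_of_interlace (hφ.antitoneOn_inter_Iic_of_isMinOn hcS hmin)
    (hφ.monotoneOn_inter_Ici_of_isMinOn hcS hmin) hx hy hxy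
  simp only [sum_sub_distrib, ← mul_sum, hsum] at key
  linarith

end ConvexOn

theorem stmt_1_general
    (lo hi : ℝ)
    (p : ℕ → Polynomial ℝ)
    (hdeg : ∀ m : ℕ, (p m).degree = m)
    (a b : ℕ → ℝ)
    (hrec : ∀ m : ℕ, Polynomial.X * p (m + 1) =
      Polynomial.C (a (m + 2)) * p (m + 2) + Polynomial.C (b (m + 1)) * p (m + 1) +
        Polynomial.C (a (m + 1)) * p m)
    (x : ℕ → ℕ → ℝ)
    (hxroot : ∀ m j : ℕ, 1 ≤ j → j ≤ m → (p m).eval (x m j) = 0)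
    (hxmono : ∀ m j : ℕ, 1 ≤ j → j + 1 ≤ m → x m j < x m (j + 1))
    (hxint : ∀ m j : ℕ, 1 ≤ j → j + 1 ≤ m → x m j < x (m - 1) j ∧ x (m - 1) j < x m (j + 1))
    (n : ℕ) (hn : 2 ≤ n)
    (f : ℝ → ℝ) (hf : ConvexOn ℝ (Set.Icc lo hi) f)
    (hx_in : ∀ j : ℕ, 1 ≤ j → j ≤ n → x n j ∈ Set.Ioo lo hi)
    (hx_in' : ∀ i : ℕ, 1 ≤ i → i ≤ n - 1 → x (n - 1) i ∈ Set.Ioo lo hi) :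
    (∑ i ∈ Finset.Icc 1 (n - 1), f (x (n - 1) i)) + f (b (n - 1)) ≤
      ∑ j ∈ Finset.Icc 1 n, f (x n j) := by
  obtain ⟨k, rfl⟩ : ∃ k, n = k + 2 := ⟨n - 2, by omega⟩
  simp only [show k + 2 - 1 = k + 1 from rfl] at hx_in' ⊢
  have hnat (m : ℕ) : (p m).natDegree = m := natDegree_eq_of_degree_eq_some (hdeg m)
  have hsum_zeros (m : ℕ) : ∑ j ∈ Icc 1 m, x m j = -(p m).nextCoeff / (p m).leadingCoeff := by
    have hmono : StrictMonoOn (x m) (Set.Icc 1 m) :=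
      strictMonoOn_of_lt_add_one Set.ordConnected_Icc fun j _ hj hj' => hxmono m j hj.1 hj'.2
    refine sum_eq_neg_nextCoeff_div_leadingCoeff (fun h => by simpa [h] using hdeg m)
      (by rw [coe_Icc]; exact hmono.injOn) (by simp [hnat])
      fun j hj => hxroot m j (mem_Icc.1 hj).1 (mem_Icc.1 hj).2
  have htrace :
      ∑ j ∈ Icc 1 (k + 2), x (k + 2) j = ∑ i ∈ Icc 1 (k + 1), x (k + 1) i + b (k + 1) := by
    rw [hsum_zeros, hsum_zeros, neg_div, neg_div,
      nextCoeff_div_leadingCoeff_of_three_term (hnat _) (hnat _) (hnat k).le (hrec k)]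
    ring
  have hinter (i : ℕ) (hi : i < k + 1) :
      x (k + 2) (i + 1) < x (k + 1) (i + 1) ∧ x (k + 1) (i + 1) < x (k + 2) (i + 1 + 1) :=
    hxint (k + 2) (i + 1) (by omega) (by omega)
  rw [sum_Icc_one_eq_sum_range, sum_Icc_one_eq_sum_range] at htrace ⊢
  have hc : b (k + 1) ∈ interior (Set.Icc lo hi) := by
    have h := sum_sub_sum_mem_Ioo_of_interlace (by omega) hinter
    rw [htrace, add_sub_cancel_left] at h
    rw [interior_Icc]
    exact ⟨(hx_in 1 le_rfl (by omega)).1.trans h.1, h.2.trans (hx_in (k + 2) (by omega) le_rfl).2⟩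
  exact hf.sum_add_le_sum_of_interlace hc
    (fun j hj => Set.Ioo_subset_Icc_self (hx_in (j + 1) (by omega) (by omega)))
    (fun i hi => Set.Ioo_subset_Icc_self (hx_in' (i + 1) (by omega) (by omega)))
    (fun i hi => ⟨(hinter i hi).1.le, (hinter i hi).2.le⟩) htrace

theorem stmt_1
    (μ : Measure ℝ) [IsProbabilityMeasure μ]
    (lo hi : ℝ)
    (hsupp : μ (Set.Icc lo hi)ᶜ = 0)
    (hinf : ∀ s : Finset ℝ, μ (↑s : Set ℝ)ᶜ ≠ 0)
    (p : ℕ → Polynomial ℝ)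
    (hdeg : ∀ m : ℕ, (p m).degree = m)
    (hlead : ∀ m : ℕ, 0 < (p m).leadingCoeff)
    (horth : ∀ m l : ℕ, ∫ t, (p m).eval t * (p l).eval t ∂μ = if m = l then 1 else 0)
    (a b : ℕ → ℝ)
    (hapos : ∀ m : ℕ, 1 ≤ m → 0 < a m)
    (hrec0 : Polynomial.X * p 0 = Polynomial.C (a 1) * p 1 + Polynomial.C (b 0) * p 0)
    (hrec : ∀ m : ℕ, Polynomial.X * p (m + 1) =
      Polynomial.C (a (m + 2)) * p (m + 2) + Polynomial.C (b (m + 1)) * p (m + 1) +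
        Polynomial.C (a (m + 1)) * p m)
    (x : ℕ → ℕ → ℝ)
    (hxroot : ∀ m j : ℕ, 1 ≤ j → j ≤ m → (p m).eval (x m j) = 0)
    (hxmono : ∀ m j : ℕ, 1 ≤ j → j + 1 ≤ m → x m j < x m (j + 1))
    (hxint : ∀ m j : ℕ, 1 ≤ j → j + 1 ≤ m → x m j < x (m - 1) j ∧ x (m - 1) j < x m (j + 1))
    (n : ℕ) (hn : 2 ≤ n)
    (f : ℝ → ℝ) (hf : ConvexOn ℝ (Set.Icc lo hi) f)
    (hx_in : ∀ j : ℕ, 1 ≤ j → j ≤ n → x n j ∈ Set.Ioo lo hi)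
    (hx_in' : ∀ i : ℕ, 1 ≤ i → i ≤ n - 1 → x (n - 1) i ∈ Set.Ioo lo hi)
    (hb_in : b (n - 1) ∈ Set.Icc lo hi) :
    (∑ i ∈ Finset.Icc 1 (n - 1), f (x (n - 1) i)) + f (b (n - 1)) ≤
      ∑ j ∈ Finset.Icc 1 n, f (x n j) :=
  stmt_1_general lo hi p hdeg a b hrec x hxroot hxmono hxint n hn f hf hx_in hx_in'
end

section
/- Fix an integer n ≥ 2. The vector v = (x_{1,n-1}, …, x_{n-1,n-1}, b_{n-1}) ∈ ℝⁿ is majorized by the vector w = (x_{1,n}, …, x_{n,n}) ∈ ℝⁿ: if v̂ and ŵ denote the components of v and w arranged in decreasing order, then Σ_{i=1}^{m} v̂_i ≤ Σ_{i=1}^{m} ŵ_i for every 1 ≤ m ≤ n−1, and Σ_{i=1}^{n} v̂_i = Σ_{i=1}^{n} ŵ_i. -/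
/-!
Comparing the coefficients of `X ^ n` and `X ^ (n - 1)` in the recurrence
`X p_{n-1} = a_n p_n + b_{n-1} p_{n-1} + a_{n-1} p_{n-2}` and using Vieta's formula gives
`b_{n-1} = ∑ x_{j,n} - ∑ x_{j,n-1}`, so `v` and `w` have the same total.

Any `m` entries of `v` are dominated by `m` entries of `w`. If `b_{n-1}` is not among them,
bound each `x_{j,n-1}` by `x_{j+1,n}`. If it is, the remaining entries of `v` are zeros
`x_{j,n-1} ≥ x_{j,n}`, and equality of the totals turns this lower bound on the complement into
an upper bound on the chosen entries. Finally, `m` entries of `w` sum to at most its `m` largest.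
-/

open MeasureTheory Polynomial Finset

theorem Polynomial.sum_eq_neg_nextCoeff_div_leadingCoeff_s2 {K : Type*} [Field K] {q : K[X]} {k : ℕ}
    (hq : q.degree = k) {r : Fin k → K} (hr : Function.Injective r)
    (hroot : ∀ i, q.eval (r i) = 0) :
    ∑ i, r i = -q.nextCoeff / q.leadingCoeff := by
  classical
  have hcard : #(univ.image r) = k := by simp [card_image_of_injective _ hr]
  have hroots : q.roots = (univ.image r).val :=
    roots_eq_of_degree_eq_card (by simpa using hroot) (by rw [hcard, hq])
  have hsplit : Splits q := splits_iff_card_roots.mpr <| by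
    rw [hroots, natDegree_eq_of_degree_eq_some hq]; exact hcard
  have hq0 : q.leadingCoeff ≠ 0 := leadingCoeff_ne_zero.2 (ne_zero_of_coe_le_degree hq.ge)
  rw [hsplit.nextCoeff_eq_neg_sum_roots_mul_leadingCoeff, hroots, sum_val, sum_image hr.injOn]
  field_simp
  rfl

theorem Polynomial.coeff_natDegree_X_mul {R : Type*} [Semiring R] (q : R[X]) :
    (X * q).coeff q.natDegree = q.nextCoeff := by
  rcases eq_or_ne q.natDegree 0 with h | h
  · rw [h, coeff_X_mul_zero, nextCoeff, if_pos h]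
  · obtain ⟨d, hd⟩ := Nat.exists_eq_add_one_of_ne_zero h
    rw [nextCoeff_of_natDegree_pos (Nat.pos_of_ne_zero h), hd, coeff_X_mul, Nat.add_sub_cancel]

theorem Polynomial.eq_div_sub_div_of_X_mul_eq {K : Type*} [Field K] {p q r : K[X]} {α β γ : K}
    {k : ℕ} (hp : p.degree = ↑(k + 1)) (hq : q.degree = k) (hr : r.degree < k)
    (h : X * q = C α * p + C β * q + C γ * r) :
    β = q.nextCoeff / q.leadingCoeff - p.nextCoeff / p.leadingCoeff := by
  have hpd := natDegree_eq_of_degree_eq_some hp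
  have hqd := natDegree_eq_of_degree_eq_some hq
  have hp0 : p.leadingCoeff ≠ 0 := leadingCoeff_ne_zero.2 (ne_zero_of_coe_le_degree hp.ge)
  have hq0 : q.leadingCoeff ≠ 0 := leadingCoeff_ne_zero.2 (ne_zero_of_coe_le_degree hq.ge)
  have hrk : r.coeff k = 0 := coeff_eq_zero_of_degree_lt hr
  have hrk1 : r.coeff (k + 1) = 0 :=
    coeff_eq_zero_of_degree_lt (hr.trans (by exact_mod_cast k.lt_succ_self))
  have hqk1 : q.coeff (k + 1) = 0 := coeff_eq_zero_of_natDegree_lt (by omega)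
  have htop : q.leadingCoeff = α * p.leadingCoeff := by
    have := congrArg (coeff · (k + 1)) h
    simp only [coeff_add, coeff_C_mul, coeff_X_mul, hrk1, hqk1, mul_zero, add_zero] at this
    rwa [← hpd, ← hqd] at this
  have hnext : q.nextCoeff = α * p.nextCoeff + β * q.leadingCoeff := by
    have := congrArg (coeff · k) h
    simp only [coeff_add, coeff_C_mul, hrk, mul_zero, add_zero] at this
    rwa [← coeff_natDegree_X_mul, nextCoeff_of_natDegree_pos (p := p) (by omega), hpd,
      Nat.add_sub_cancel, leadingCoeff, hqd]
  have hα : α ≠ 0 := left_ne_zero_of_mul (htop ▸ hq0)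
  rw [hnext, htop]
  field_simp
  ring

theorem Fin.sum_le_sum_filter_val_lt_card_of_antitone {M : Type*} [AddCommMonoid M]
    [PartialOrder M] [IsOrderedAddMonoid M] {N : ℕ} {g : Fin N → M} (hg : Antitone g)
    (U : Finset (Fin N)) :
    ∑ i ∈ U, g i ≤ ∑ i ∈ univ.filter (fun i : Fin N => (i : ℕ) < #U), g i := by
  induction U using Finset.induction_on_max with
  | empty => simp
  | insert a s hlt ih =>
    have ha : a ∉ s := fun h => lt_irrefl _ (hlt a h)
    have hcard : #s ≤ a := by
      simpa using card_le_card (fun x hx => mem_Iio.2 (hlt x hx) : s ⊆ Iio a)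
    have hprefix : univ.filter (fun i : Fin N => (i : ℕ) < #s + 1) =
        insert ⟨#s, by omega⟩ (univ.filter fun i : Fin N => (i : ℕ) < #s) := by
      ext i; simp [Fin.ext_iff]; omega
    rw [sum_insert ha, card_insert_of_notMem ha, hprefix, sum_insert (by simp)]
    exact add_le_add (hg (Fin.mk_le_of_le_val hcard)) ih

theorem Fin.exists_card_eq_sum_le_of_interlace {M : Type*} [AddCommGroup M] [PartialOrder M]
    [IsOrderedAddMonoid M] {k : ℕ} {v w : Fin (k + 1) → M}
    (hlo : ∀ j : Fin k, w j.castSucc ≤ v j.castSucc)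
    (hhi : ∀ j : Fin k, v j.castSucc ≤ w j.succ)
    (hsum : ∑ i, v i = ∑ i, w i) (T : Finset (Fin (k + 1))) :
    ∃ S : Finset (Fin (k + 1)), #S = #T ∧ ∑ i ∈ T, v i ≤ ∑ i ∈ S, w i := by
  by_cases hlast : Fin.last k ∈ T
  · refine ⟨T, rfl, ?_⟩
    have hcompl : ∑ i ∈ Tᶜ, w i ≤ ∑ i ∈ Tᶜ, v i := sum_le_sum fun i hi => by
      have hi : i ≠ Fin.last k := by rintro rfl; exact mem_compl.1 hi hlast
      obtain ⟨j, rfl⟩ := Fin.eq_castSucc_of_ne_last hi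
      exact hlo j
    rw [← sum_add_sum_compl T v, ← sum_add_sum_compl T w] at hsum
    calc ∑ i ∈ T, v i
        = (∑ i ∈ T, v i + ∑ i ∈ Tᶜ, v i) - ∑ i ∈ Tᶜ, v i := by abel
      _ = (∑ i ∈ T, w i + ∑ i ∈ Tᶜ, w i) - ∑ i ∈ Tᶜ, v i := by rw [hsum]
      _ ≤ (∑ i ∈ T, w i + ∑ i ∈ Tᶜ, w i) - ∑ i ∈ Tᶜ, w i :=
        sub_le_sub_left hcompl _
      _ = ∑ i ∈ T, w i := add_sub_cancel_right _ _
  · refine ⟨T.map (finRotate (k + 1)).toEmbedding, card_map _, ?_⟩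
    rw [sum_map]
    refine sum_le_sum fun i hi => ?_
    obtain ⟨j, rfl⟩ := Fin.eq_castSucc_of_ne_last fun h => hlast (h ▸ hi)
    simpa [finRotate_apply, Fin.coeSucc_eq_succ] using hhi j

theorem stmt_2_general
    (p : ℕ → Polynomial ℝ)
    (hdeg : ∀ m : ℕ, (p m).degree = m)
    (a b : ℕ → ℝ)
    (hrec : ∀ m : ℕ, Polynomial.X * p (m + 1) =
      Polynomial.C (a (m + 2)) * p (m + 2) + Polynomial.C (b (m + 1)) * p (m + 1) +
        Polynomial.C (a (m + 1)) * p m)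
    (x : ℕ → ℕ → ℝ)
    (hxroot : ∀ m j : ℕ, 1 ≤ j → j ≤ m → (p m).eval (x m j) = 0)
    (hxmono : ∀ m j : ℕ, 1 ≤ j → j + 1 ≤ m → x m j < x m (j + 1))
    (hxint : ∀ m j : ℕ, 1 ≤ j → j + 1 ≤ m → x m j < x (m - 1) j ∧ x (m - 1) j < x m (j + 1))
    (n : ℕ) (hn : 2 ≤ n)
    (v w : Fin n → ℝ)
    (hv : ∀ i : Fin n, (i : ℕ) + 1 ≤ n - 1 → v i = x (n - 1) ((i : ℕ) + 1))
    (hv' : ∀ i : Fin n, (i : ℕ) + 1 = n → v i = b (n - 1))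
    (hw : ∀ i : Fin n, w i = x n ((i : ℕ) + 1))
    (σ τ : Equiv.Perm (Fin n))
    (hτ : Antitone (fun i => w (τ i))) :
    (∀ m : ℕ, 1 ≤ m → m ≤ n - 1 →
      ∑ i ∈ Finset.univ.filter (fun i : Fin n => (i : ℕ) < m), v (σ i) ≤
        ∑ i ∈ Finset.univ.filter (fun i : Fin n => (i : ℕ) < m), w (τ i)) ∧
    ∑ i : Fin n, v i = ∑ i : Fin n, w i := by
  obtain ⟨k, rfl⟩ : ∃ k, n = k + 2 := ⟨n - 2, by omega⟩
  rw [show k + 2 - 1 = k + 1 from rfl] at hv hv'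
  have hsum_roots (m : ℕ) :
      ∑ j : Fin m, x m (j + 1) = -(p m).nextCoeff / (p m).leadingCoeff := by
    refine sum_eq_neg_nextCoeff_div_leadingCoeff_s2 (hdeg m) ?_ fun j => hxroot m _ le_add_self j.2
    rcases m with _ | m
    · exact fun i => i.elim0
    · exact (Fin.strictMono_iff_lt_succ.2 fun j =>
        hxmono _ _ le_add_self (Nat.succ_le_succ j.2)).injective
  have hb : b (k + 1) =
      ∑ j : Fin (k + 2), x (k + 2) (j + 1) - ∑ j : Fin (k + 1), x (k + 1) (j + 1) := by
    have hdeg_lt : (p k).degree < ↑(k + 1) := by rw [hdeg]; exact_mod_cast k.lt_succ_self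
    rw [eq_div_sub_div_of_X_mul_eq (hdeg _) (hdeg _) hdeg_lt (hrec k), hsum_roots, hsum_roots]
    ring
  have hv_castSucc (j : Fin (k + 1)) : v j.castSucc = x (k + 1) (j + 1) := hv _ j.2
  have hsum : ∑ i, v i = ∑ i, w i := by
    rw [Fin.sum_univ_castSucc, hv' (Fin.last _) rfl]
    simp only [hv_castSucc, hw, hb]
    ring
  refine ⟨fun m _ hm => ?_, hsum⟩
  set F := univ.filter fun i : Fin (k + 2) => (i : ℕ) < m
  obtain ⟨S, hS, hle⟩ := Fin.exists_card_eq_sum_le_of_interlace (v := v) (w := w)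
    (fun j => by
      rw [hw, hv_castSucc]
      exact (hxint (k + 2) (j + 1) le_add_self (Nat.succ_le_succ j.2)).1.le)
    (fun j => by
      rw [hw, hv_castSucc]
      exact (hxint (k + 2) (j + 1) le_add_self (Nat.succ_le_succ j.2)).2.le)
    hsum (F.map σ.toEmbedding)
  have hcard : #(S.map τ.symm.toEmbedding) = m := by
    rw [card_map, hS, card_map, Fin.card_filter_val_lt, min_eq_right (by omega)]
  calc ∑ i ∈ F, v (σ i) = ∑ i ∈ F.map σ.toEmbedding, v i := by rw [sum_map]; rfl
    _ ≤ ∑ i ∈ S, w i := hle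
    _ = ∑ i ∈ S.map τ.symm.toEmbedding, w (τ i) := by simp [sum_map]
    _ ≤ ∑ i ∈ F, w (τ i) :=
      (Fin.sum_le_sum_filter_val_lt_card_of_antitone hτ _).trans_eq (by rw [hcard])

theorem stmt_2
    (μ : Measure ℝ) [IsProbabilityMeasure μ]
    (lo hi : ℝ)
    (hsupp : μ (Set.Icc lo hi)ᶜ = 0)
    (hinf : ∀ s : Finset ℝ, μ (↑s : Set ℝ)ᶜ ≠ 0)
    (p : ℕ → Polynomial ℝ)
    (hdeg : ∀ m : ℕ, (p m).degree = m)
    (hlead : ∀ m : ℕ, 0 < (p m).leadingCoeff)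
    (horth : ∀ m l : ℕ, ∫ t, (p m).eval t * (p l).eval t ∂μ = if m = l then 1 else 0)
    (a b : ℕ → ℝ)
    (hapos : ∀ m : ℕ, 1 ≤ m → 0 < a m)
    (hrec0 : Polynomial.X * p 0 = Polynomial.C (a 1) * p 1 + Polynomial.C (b 0) * p 0)
    (hrec : ∀ m : ℕ, Polynomial.X * p (m + 1) =
      Polynomial.C (a (m + 2)) * p (m + 2) + Polynomial.C (b (m + 1)) * p (m + 1) +
        Polynomial.C (a (m + 1)) * p m)
    (x : ℕ → ℕ → ℝ)
    (hxroot : ∀ m j : ℕ, 1 ≤ j → j ≤ m → (p m).eval (x m j) = 0)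
    (hxmono : ∀ m j : ℕ, 1 ≤ j → j + 1 ≤ m → x m j < x m (j + 1))
    (hxint : ∀ m j : ℕ, 1 ≤ j → j + 1 ≤ m → x m j < x (m - 1) j ∧ x (m - 1) j < x m (j + 1))
    (n : ℕ) (hn : 2 ≤ n)
    (v w : Fin n → ℝ)
    (hv : ∀ i : Fin n, (i : ℕ) + 1 ≤ n - 1 → v i = x (n - 1) ((i : ℕ) + 1))
    (hv' : ∀ i : Fin n, (i : ℕ) + 1 = n → v i = b (n - 1))
    (hw : ∀ i : Fin n, w i = x n ((i : ℕ) + 1))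
    (σ τ : Equiv.Perm (Fin n))
    (hσ : Antitone (fun i => v (σ i))) (hτ : Antitone (fun i => w (τ i))) :
    (∀ m : ℕ, 1 ≤ m → m ≤ n - 1 →
      ∑ i ∈ Finset.univ.filter (fun i : Fin n => (i : ℕ) < m), v (σ i) ≤
        ∑ i ∈ Finset.univ.filter (fun i : Fin n => (i : ℕ) < m), w (τ i)) ∧
    ∑ i : Fin n, v i = ∑ i : Fin n, w i :=
  stmt_2_general p hdeg a b hrec x hxroot hxmono hxint n hn v w hv hv' hw σ τ hτ
end

section
/- Fix n ≥ 2 and 1 ≤ j ≤ n. Then a_n² λ_{j,n} p_{n-1}(x_{j,n})² · Σ_{i=1}^{n-1} λ_{i,n-1} p_n(x_{i,n-1})²/(x_{j,n} − x_{i,n-1})² = 1 − λ_{j,n} p_{n-1}(x_{j,n})². -/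
open MeasureTheory Polynomial Finset

/-!
Let `K_m(s, t) = ∑_{k < m} p_k(s) p_k(t)`. For the zero `X = x_{n,j}` of `p_n` and a zero `y`
of `p_{n-1}`, the Christoffel–Darboux formula reads
`(X - y) K_{n-1}(X, y) = -a_n p_{n-1}(X) p_n(y)`, so the sum in the theorem is
`∑_y λ_y K_{n-1}(X, y)² / (a_n p_{n-1}(X))²`. Christoffel–Darboux also says that the rows of
the square matrix `(p_k(y) / √K_{n-1}(y, y))_{y, k}` are orthonormal; hence so are its columns,
and Parseval's identity gives
`∑_y λ_y K_{n-1}(X, y)² = K_{n-1}(X, X) = 1 / λ_{j,n} - p_{n-1}(X)²`.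
-/
open Matrix in
theorem Matrix.dotProduct_mulVec_self_of_transpose_mul_eq_one {m n R : Type*} [Fintype m]
    [Fintype n] [DecidableEq n] [CommSemiring R] {M : Matrix m n R} (hM : Mᵀ * M = 1)
    (u : n → R) : (M *ᵥ u) ⬝ᵥ (M *ᵥ u) = u ⬝ᵥ u := by
  rw [dotProduct_mulVec, vecMul_mulVec, ← mulVec_transpose, hM, transpose_one, one_mulVec]

section CommRing

variable {R : Type*} [CommRing R]

def christoffelKernel (p : ℕ → R[X]) (m : ℕ) (s t : R) : R :=
  ∑ k ∈ range m, (p k).eval s * (p k).eval t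

theorem christoffelKernel_succ (p : ℕ → R[X]) (m : ℕ) (s t : R) :
    christoffelKernel p (m + 1) s t = christoffelKernel p m s t + (p m).eval s * (p m).eval t :=
  sum_range_succ _ _

theorem christoffelKernel_comm (p : ℕ → R[X]) (m : ℕ) (s t : R) :
    christoffelKernel p m s t = christoffelKernel p m t s := by
  simp only [christoffelKernel, mul_comm]

theorem christoffelKernel_self (p : ℕ → R[X]) (m : ℕ) (s : R) :
    christoffelKernel p m s s = ∑ k ∈ range m, (p k).eval s ^ 2 := by
  simp only [christoffelKernel, sq]

structure IsThreeTermRecurrence (p : ℕ → R[X]) (a b : ℕ → R) : Prop where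
  zero : X * p 0 = C (a 1) * p 1 + C (b 0) * p 0
  succ (m : ℕ) : X * p (m + 1) =
    C (a (m + 2)) * p (m + 2) + C (b (m + 1)) * p (m + 1) + C (a (m + 1)) * p m

namespace IsThreeTermRecurrence

variable {p : ℕ → R[X]} {a b : ℕ → R}

theorem christoffelDarboux (hp : IsThreeTermRecurrence p a b) (m : ℕ) (s t : R) :
    (s - t) * christoffelKernel p (m + 1) s t =
      a (m + 1) * ((p (m + 1)).eval s * (p m).eval t - (p m).eval s * (p (m + 1)).eval t) := by
  induction m with
  | zero =>
    have hs := congrArg (eval s) hp.zero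
    have ht := congrArg (eval t) hp.zero
    simp only [eval_mul, eval_X, eval_C, eval_add] at hs ht
    simp only [christoffelKernel, zero_add, range_one, sum_singleton]
    linear_combination (p 0).eval t * hs - (p 0).eval s * ht
  | succ m ih =>
    have hs := congrArg (eval s) (hp.succ m)
    have ht := congrArg (eval t) (hp.succ m)
    simp only [eval_mul, eval_X, eval_C, eval_add] at hs ht
    rw [christoffelKernel_succ, mul_add]
    linear_combination ih + (p (m + 1)).eval t * hs - (p (m + 1)).eval s * ht

theorem christoffelDarboux_confluent (hp : IsThreeTermRecurrence p a b) (m : ℕ) (s : R) :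
    christoffelKernel p (m + 1) s s =
      a (m + 1) * ((p (m + 1)).derivative.eval s * (p m).eval s -
        (p m).derivative.eval s * (p (m + 1)).eval s) := by
  induction m with
  | zero =>
    have hv := congrArg (eval s) hp.zero
    have hd := congrArg (fun q => (derivative q).eval s) hp.zero
    simp only [eval_mul, eval_X, eval_C, eval_add] at hv
    simp only [derivative_mul, derivative_X, derivative_C, derivative_add, zero_mul, one_mul,
      zero_add, eval_add, eval_mul, eval_X, eval_C] at hd
    simp only [christoffelKernel, zero_add, range_one, sum_singleton]
    linear_combination (p 0).eval s * hd - (p 0).derivative.eval s * hv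
  | succ m ih =>
    have hv := congrArg (eval s) (hp.succ m)
    have hd := congrArg (fun q => (derivative q).eval s) (hp.succ m)
    simp only [eval_mul, eval_X, eval_C, eval_add] at hv
    simp only [derivative_mul, derivative_X, derivative_C, derivative_add, zero_mul, one_mul,
      zero_add, eval_add, eval_mul, eval_X, eval_C] at hd
    rw [christoffelKernel_succ]
    linear_combination ih + (p (m + 1)).eval s * hd - (p (m + 1)).derivative.eval s * hv

theorem christoffelKernel_eq_zero_of_isRoot [IsDomain R] (hp : IsThreeTermRecurrence p a b)
    {m : ℕ} {s t : R} (hs : (p m).eval s = 0) (ht : (p m).eval t = 0) (hst : s ≠ t) :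
    christoffelKernel p m s t = 0 := by
  cases m with
  | zero => simp [christoffelKernel]
  | succ m =>
    have h := hp.christoffelDarboux m s t
    rw [hs, ht, zero_mul, mul_zero, sub_self, mul_zero] at h
    exact (mul_eq_zero.mp h).resolve_left (sub_ne_zero.mpr hst)

end IsThreeTermRecurrence

end CommRing

theorem christoffelKernel_self_pos {p : ℕ → ℝ[X]} {m : ℕ} (hm : 0 < m) {s : ℝ}
    (h0 : (p 0).eval s ≠ 0) : 0 < christoffelKernel p m s s := by
  rw [christoffelKernel_self]
  exact sum_pos' (fun _ _ => sq_nonneg _) ⟨0, mem_range.2 hm, sq_pos_of_ne_zero h0⟩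

namespace IsThreeTermRecurrence

variable {p : ℕ → ℝ[X]} {a b : ℕ → ℝ}

theorem eval_ne_zero_of_eval_succ_eq_zero (hp : IsThreeTermRecurrence p a b) {m : ℕ} {s : ℝ}
    (h0 : (p 0).eval s ≠ 0) (hs : (p (m + 1)).eval s = 0) : (p m).eval s ≠ 0 := by
  intro hm
  have h := hp.christoffelDarboux_confluent m s
  rw [hs, hm, mul_zero, mul_zero, sub_zero, mul_zero] at h
  exact (christoffelKernel_self_pos m.succ_pos h0).ne' h

theorem sq_eval_div_sq_sub (hp : IsThreeTermRecurrence p a b) {m : ℕ} (ha : a (m + 2) ≠ 0)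
    {s t : ℝ} (h0 : (p 0).eval s ≠ 0) (hs : (p (m + 2)).eval s = 0)
    (ht : (p (m + 1)).eval t = 0) :
    (p (m + 2)).eval t ^ 2 / (s - t) ^ 2 =
      christoffelKernel p (m + 1) s t ^ 2 / (a (m + 2) * (p (m + 1)).eval s) ^ 2 := by
  have hP := hp.eval_ne_zero_of_eval_succ_eq_zero h0 hs
  have hst : s - t ≠ 0 := fun h => hP (by rwa [sub_eq_zero.mp h])
  have hCD := hp.christoffelDarboux (m + 1) s t
  rw [christoffelKernel_succ, ht, mul_zero, add_zero, hs, zero_mul, zero_sub] at hCD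
  rw [div_eq_div_iff (by positivity) (by positivity)]
  linear_combination (-((s - t) * christoffelKernel p (m + 1) s t -
    a (m + 2) * (p (m + 1)).eval s * (p (m + 2)).eval t)) * hCD

open Matrix in
theorem sum_sq_christoffelKernel_div_self (hp : IsThreeTermRecurrence p a b) {N : ℕ}
    {Z : Finset ℝ} (hZ : ∀ z ∈ Z, (p N).eval z = 0) (hcard : #Z = N)
    (h0 : ∀ z ∈ Z, (p 0).eval z ≠ 0) (s : ℝ) :
    ∑ z ∈ Z, christoffelKernel p N s z ^ 2 / christoffelKernel p N z z =
      christoffelKernel p N s s := by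
  rcases N.eq_zero_or_pos with rfl | hN
  · simp [christoffelKernel]
  set K := christoffelKernel p N
  have hK : ∀ z ∈ Z, 0 < K z z := fun z hz => christoffelKernel_self_pos hN (h0 z hz)
  let M : Matrix Z (Fin N) ℝ := fun z k => (p k).eval (z : ℝ) / √(K z z)
  have hMv : ∀ (z : Z) (t : ℝ), (M *ᵥ fun k => (p k).eval t) z = K z t / √(K z z) := by
    intro z t
    simp only [M, K, mulVec, dotProduct, christoffelKernel, sum_div, div_mul_eq_mul_div]
    exact Fin.sum_univ_eq_sum_range (fun k => (p k).eval (z : ℝ) * (p k).eval t / _) N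
  have hMMt : M * Mᵀ = 1 := by
    ext z z'
    have hMz' : (M * Mᵀ) z z' = K z z' / √(K z z) / √(K z' z') := by
      rw [mul_apply, ← hMv, mulVec, dotProduct, sum_div]
      simp only [M, mul_div_assoc]
      rfl
    rw [hMz', one_apply]
    split_ifs with h
    · rw [h, div_div, Real.mul_self_sqrt (hK z' z'.2).le, div_self (hK z' z'.2).ne']
    · have hzz' : K z z' = 0 :=
        hp.christoffelKernel_eq_zero_of_isRoot (hZ z z.2) (hZ z' z'.2) (Subtype.coe_injective.ne h)
      rw [hzz', zero_div, zero_div]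
  have hMtM : Mᵀ * M = 1 :=
    (mul_eq_one_comm_of_equiv (Fintype.equivFinOfCardEq (by simp [hcard]))).mp hMMt
  have hparseval := dotProduct_mulVec_self_of_transpose_mul_eq_one hMtM fun k => (p k).eval s
  simp only [dotProduct, hMv] at hparseval
  calc ∑ z ∈ Z, K s z ^ 2 / K z z = ∑ z : Z, K z s / √(K z z) * (K z s / √(K z z)) := by
        rw [← sum_coe_sort]
        refine sum_congr rfl fun z _ => ?_
        rw [div_mul_div_comm, Real.mul_self_sqrt (hK z z.2).le, ← sq]
        exact congrArg (· ^ 2 / K z z) (christoffelKernel_comm p N s z)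
    _ = K s s :=
        hparseval.trans (Fin.sum_univ_eq_sum_range (fun k => (p k).eval s * (p k).eval s) N)

end IsThreeTermRecurrence

theorem stmt_7_general
    (p : ℕ → Polynomial ℝ)
    (hdeg : ∀ m : ℕ, (p m).degree = m)
    (a b : ℕ → ℝ)
    (hapos : ∀ m : ℕ, 1 ≤ m → 0 < a m)
    (hrec0 : Polynomial.X * p 0 = Polynomial.C (a 1) * p 1 + Polynomial.C (b 0) * p 0)
    (hrec : ∀ m : ℕ, Polynomial.X * p (m + 1) =
      Polynomial.C (a (m + 2)) * p (m + 2) + Polynomial.C (b (m + 1)) * p (m + 1) +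
        Polynomial.C (a (m + 1)) * p m)
    (x : ℕ → ℕ → ℝ)
    (hxroot : ∀ m j : ℕ, 1 ≤ j → j ≤ m → (p m).eval (x m j) = 0)
    (hxmono : ∀ m j : ℕ, 1 ≤ j → j + 1 ≤ m → x m j < x m (j + 1))
    (lam : ℕ → ℕ → ℝ)
    (hlam : ∀ m j : ℕ, lam m j = (∑ i ∈ Finset.range m, ((p i).eval (x m j)) ^ 2)⁻¹)
    (n : ℕ) (hn : 2 ≤ n) (j : ℕ) (hj1 : 1 ≤ j) (hj2 : j ≤ n) :
    a n ^ 2 * lam n j * ((p (n - 1)).eval (x n j)) ^ 2 *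
      (∑ i ∈ Finset.Icc 1 (n - 1),
        lam (n - 1) i * ((p n).eval (x (n - 1) i)) ^ 2 / (x n j - x (n - 1) i) ^ 2) =
      1 - lam n j * ((p (n - 1)).eval (x n j)) ^ 2 := by
  obtain ⟨m, rfl⟩ : ∃ m, n = m + 2 := ⟨n - 2, by omega⟩
  have hp : IsThreeTermRecurrence p a b := ⟨hrec0, hrec⟩
  have hdeg0 : (p 0).degree = 0 := by simpa using hdeg 0
  have h0 : ∀ s, (p 0).eval s ≠ 0 := fun s => by
    rw [eq_C_of_degree_eq_zero hdeg0, eval_C]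
    exact coeff_ne_zero_of_eq_degree hdeg0
  rw [show m + 2 - 1 = m + 1 from rfl, hlam, ← christoffelKernel_self, christoffelKernel_succ]
  set X := x (m + 2) j
  have hX : (p (m + 2)).eval X = 0 := hxroot _ _ hj1 hj2
  have hinj : Set.InjOn (x (m + 1)) (Icc 1 (m + 1)) := by
    rw [coe_Icc]
    exact (strictMonoOn_of_lt_add_one Set.ordConnected_Icc
      fun i _ hi hi' => hxmono (m + 1) i hi.1 hi'.2).injOn
  have hZ : ∀ z ∈ (Icc 1 (m + 1)).image (x (m + 1)), (p (m + 1)).eval z = 0 := by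
    simp only [mem_image, mem_Icc]
    rintro _ ⟨i, ⟨hi1, hi2⟩, rfl⟩
    exact hxroot _ _ hi1 hi2
  have hcard : #((Icc 1 (m + 1)).image (x (m + 1))) = m + 1 := by
    rw [card_image_of_injOn hinj, Nat.card_Icc, Nat.add_sub_cancel]
  have hsum : ∑ i ∈ Icc 1 (m + 1),
      lam (m + 1) i * (p (m + 2)).eval (x (m + 1) i) ^ 2 / (X - x (m + 1) i) ^ 2 =
        christoffelKernel p (m + 1) X X / (a (m + 2) * (p (m + 1)).eval X) ^ 2 := by
    rw [← hp.sum_sq_christoffelKernel_div_self hZ hcard (fun z _ => h0 z) X, sum_image hinj,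
      sum_div]
    refine sum_congr rfl fun i hi => ?_
    rw [mem_Icc] at hi
    rw [mul_div_assoc, hp.sq_eval_div_sq_sub (hapos _ (by omega)).ne' (h0 X) hX
      (hxroot _ _ hi.1 hi.2), hlam, ← christoffelKernel_self]
    ring
  have hP := hp.eval_ne_zero_of_eval_succ_eq_zero (h0 X) hX
  have hpos := christoffelKernel_self_pos (p := p) m.succ_pos (h0 X)
  have ha := (hapos (m + 2) (by omega)).ne'
  rw [hsum]
  field_simp
  ring

theorem stmt_7
    (μ : Measure ℝ) [IsProbabilityMeasure μ]
    (lo hi : ℝ)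
    (hsupp : μ (Set.Icc lo hi)ᶜ = 0)
    (hinf : ∀ s : Finset ℝ, μ (↑s : Set ℝ)ᶜ ≠ 0)
    (p : ℕ → Polynomial ℝ)
    (hdeg : ∀ m : ℕ, (p m).degree = m)
    (hlead : ∀ m : ℕ, 0 < (p m).leadingCoeff)
    (horth : ∀ m l : ℕ, ∫ t, (p m).eval t * (p l).eval t ∂μ = if m = l then 1 else 0)
    (a b : ℕ → ℝ)
    (hapos : ∀ m : ℕ, 1 ≤ m → 0 < a m)
    (hrec0 : Polynomial.X * p 0 = Polynomial.C (a 1) * p 1 + Polynomial.C (b 0) * p 0)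
    (hrec : ∀ m : ℕ, Polynomial.X * p (m + 1) =
      Polynomial.C (a (m + 2)) * p (m + 2) + Polynomial.C (b (m + 1)) * p (m + 1) +
        Polynomial.C (a (m + 1)) * p m)
    (x : ℕ → ℕ → ℝ)
    (hxroot : ∀ m j : ℕ, 1 ≤ j → j ≤ m → (p m).eval (x m j) = 0)
    (hxmono : ∀ m j : ℕ, 1 ≤ j → j + 1 ≤ m → x m j < x m (j + 1))
    (hxint : ∀ m j : ℕ, 1 ≤ j → j + 1 ≤ m → x m j < x (m - 1) j ∧ x (m - 1) j < x m (j + 1))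
    (lam : ℕ → ℕ → ℝ)
    (hlam : ∀ m j : ℕ, lam m j = (∑ i ∈ Finset.range m, ((p i).eval (x m j)) ^ 2)⁻¹)
    (n : ℕ) (hn : 2 ≤ n) (j : ℕ) (hj1 : 1 ≤ j) (hj2 : j ≤ n) :
    a n ^ 2 * lam n j * ((p (n - 1)).eval (x n j)) ^ 2 *
      (∑ i ∈ Finset.Icc 1 (n - 1),
        lam (n - 1) i * ((p n).eval (x (n - 1) i)) ^ 2 / (x n j - x (n - 1) i) ^ 2) =
      1 - lam n j * ((p (n - 1)).eval (x n j)) ^ 2 :=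
  stmt_7_general p hdeg a b hapos hrec0 hrec x hxroot hxmono lam hlam n hn j hj1 hj2
end

section
/- Fix an integer n ≥ 2. Define the n×n matrix B by B_{i,j} = a_1² λ_{j,n} λ^{(1)}_{i,n-1} / (y_{i,n-1} − x_{j,n})² for 1 ≤ i ≤ n−1 and 1 ≤ j ≤ n, and B_{n,j} = λ_{j,n} for 1 ≤ j ≤ n. Then B is doubly stochastic, y_{i,n-1} = Σ_{j=1}^{n} B_{i,j} x_{j,n} for every 1 ≤ i ≤ n−1, and b_0 = Σ_{j=1}^{n} B_{n,j} x_{j,n}. -/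
/-!
The nodes `x n j` with the Christoffel numbers `lam n j` form a discrete probability measure `ν`
that integrates `p 0, …, p (n - 1)` exactly: by Christoffel–Darboux the square matrix
`(p i (x n j))` is orthogonal for the weights `lam n`, hence so is its transpose. Integrating the
three-term recurrence against `ν` identifies `q (n - 1)` with `a 1` times the polynomial of the
second kind of `p n`, i.e. `q (n - 1) / p n = a 1 ∑ j, lam n j / (X - x n j)`. So the `y (n - 1) i`
are the zeros of the Stieltjes transform `G z = ∑ j, lam n j / (z - x n j)`, and the Casorati
identity `a n (p n q (n - 2) - p (n - 1) q (n - 1)) = -a 1` turns `lam1 (n - 1) i` into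
`1 / (a 1 ^ 2 S i)` with `S i = ∑ j, lam n j / (y i - x n j) ^ 2 = -G' (y i)`.

Row `i < n` of `B` is then the probability vector `lam n j / ((y i - x n j) ^ 2 S i)`, whose mean
is `y i` because `G (y i) = 0`. For the column sums let `P = ∏ j, (X - x j)` and
`Q = ∑ j, lam j P / (X - x j)`: interpolating `P / (X - x j) - Q`, of degree `< n - 1`, at the
`n - 1` zeros of `Q` and evaluating at `x j` gives `∑ i, B i j = 1 - lam j`.
-/

open MeasureTheory Polynomial Finset

namespace Polynomial

section DivByMonic

variable {R : Type*} [CommRing R] (P Q : R[X]) (r c : R)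

theorem X_sub_C_mul_divByMonic_X_sub_C : (X - C c) * (P /ₘ (X - C c)) = P - C (P.eval c) := by
  rw [X_sub_C_mul_divByMonic_eq_sub_modByMonic, modByMonic_X_sub_C_eq_C_eval]

theorem add_divByMonic_X_sub_C :
    (P + Q) /ₘ (X - C c) = P /ₘ (X - C c) + Q /ₘ (X - C c) := by
  apply (monic_X_sub_C c).isRegular.left
  simp only [mul_add, X_sub_C_mul_divByMonic_X_sub_C, eval_add, C_add]
  ring

theorem C_mul_divByMonic_X_sub_C : (C r * P) /ₘ (X - C c) = C r * (P /ₘ (X - C c)) := by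
  apply (monic_X_sub_C c).isRegular.left
  simp only [X_sub_C_mul_divByMonic_X_sub_C, mul_left_comm (X - C c), eval_mul, eval_C, C_mul]
  ring

theorem X_mul_divByMonic_X_sub_C :
    (X * P) /ₘ (X - C c) = X * (P /ₘ (X - C c)) + C (P.eval c) := by
  apply (monic_X_sub_C c).isRegular.left
  simp only [mul_add, X_sub_C_mul_divByMonic_X_sub_C, mul_left_comm (X - C c), eval_mul, eval_X,
    C_mul]
  ring

theorem eval_divByMonic_X_sub_C_self : (P /ₘ (X - C c)).eval c = (derivative P).eval c := by
  simpa using congrArg (eval c) (divByMonic_add_X_sub_C_mul_derivative_divByMonic_eq_derivative P c)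

end DivByMonic

section DivByMonicField

variable {K : Type*} [Field K] (P : K[X]) {c z : K}

theorem eval_divByMonic_X_sub_C_of_ne (hz : z ≠ c) :
    (P /ₘ (X - C c)).eval z = (P.eval z - P.eval c) / (z - c) := by
  rw [eq_div_iff (sub_ne_zero.mpr hz), mul_comm]
  simpa using congrArg (eval z) (X_sub_C_mul_divByMonic_X_sub_C P c)

theorem eval_derivative_divByMonic_X_sub_C_of_ne (hz : z ≠ c) :
    (derivative (P /ₘ (X - C c))).eval z =
      ((derivative P).eval z - (P /ₘ (X - C c)).eval z) / (z - c) := by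
  rw [eq_div_iff (sub_ne_zero.mpr hz), eq_sub_iff_add_eq', mul_comm]
  simpa using congrArg (eval z) (divByMonic_add_X_sub_C_mul_derivative_divByMonic_eq_derivative P c)

end DivByMonicField

theorem degree_sum_C_mul_lt {R κ : Type*} [CommRing R] {t : Finset κ} {r : κ → R} {f : κ → R[X]}
    {d : ℕ} (h : ∀ i ∈ t, (f i).degree < d) : (∑ i ∈ t, C (r i) * f i).degree < d := by
  simp_rw [← mem_degreeLT, C_mul'] at h ⊢
  exact Submodule.sum_mem _ fun i hi => Submodule.smul_mem _ _ (h i hi)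

section SecondKind

variable {ι R : Type*} [CommRing R] (s : Finset ι) (w x : ι → R)

/-- For the discrete measure `ν = ∑ j ∈ s, w j • δ (x j)` this is `∫ (P(X) - P(t)) / (X - t) dν(t)`,
the polynomial of the second kind attached to `P`. -/
noncomputable def secondKind (P : R[X]) : R[X] :=
  ∑ j ∈ s, C (w j) * (P /ₘ (X - C (x j)))

theorem secondKind_add (P Q : R[X]) :
    secondKind s w x (P + Q) = secondKind s w x P + secondKind s w x Q := by
  simp only [secondKind, add_divByMonic_X_sub_C, mul_add, sum_add_distrib]

theorem secondKind_C_mul (r : R) (P : R[X]) :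
    secondKind s w x (C r * P) = C r * secondKind s w x P := by
  simp only [secondKind, C_mul_divByMonic_X_sub_C, mul_sum, mul_left_comm]

theorem secondKind_X_mul (P : R[X]) :
    secondKind s w x (X * P) = X * secondKind s w x P + C (∑ j ∈ s, w j * P.eval (x j)) := by
  simp only [secondKind, X_mul_divByMonic_X_sub_C, mul_add, sum_add_distrib, mul_sum, map_sum,
    C_mul, mul_left_comm]

theorem secondKind_one : secondKind s w x 1 = 0 := by
  refine sum_eq_zero fun j _ => ?_
  have h : (X - C (x j)) * (1 /ₘ (X - C (x j))) = (X - C (x j)) * 0 := by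
    rw [X_sub_C_mul_divByMonic_X_sub_C, eval_one, C_1, sub_self, mul_zero]
  rw [(monic_X_sub_C _).isRegular.left h, mul_zero]

end SecondKind

section SecondKindField

variable {ι K : Type*} [Field K] {s : Finset ι} (w : ι → K) {x : ι → K} {P : K[X]}

theorem eval_secondKind_at_node (hx : Set.InjOn x s) (hP : ∀ k ∈ s, P.eval (x k) = 0) {j : ι}
    (hj : j ∈ s) : (secondKind s w x P).eval (x j) = w j * (derivative P).eval (x j) := by
  rw [secondKind, eval_finsetSum, sum_eq_single_of_mem j hj]
  · rw [eval_mul, eval_C, eval_divByMonic_X_sub_C_self]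
  · intro k hk hkj
    rw [eval_mul, eval_divByMonic_X_sub_C_of_ne _ ((hx.ne_iff hj hk).2 hkj.symm), hP j hj,
      hP k hk, sub_zero, zero_div, mul_zero]

variable (hP : ∀ j ∈ s, P.eval (x j) = 0) {z : K} (hz : ∀ j ∈ s, z ≠ x j)
include hP hz

theorem eval_secondKind_not_at_node :
    (secondKind s w x P).eval z = P.eval z * ∑ j ∈ s, w j / (z - x j) := by
  rw [secondKind, eval_finsetSum, mul_sum]
  refine sum_congr rfl fun j hj => ?_
  rw [eval_mul, eval_C, eval_divByMonic_X_sub_C_of_ne _ (hz j hj), hP j hj]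
  ring

theorem eval_derivative_secondKind_not_at_node :
    (derivative (secondKind s w x P)).eval z =
      (derivative P).eval z * ∑ j ∈ s, w j / (z - x j) -
        P.eval z * ∑ j ∈ s, w j / (z - x j) ^ 2 := by
  rw [secondKind, derivative_sum, eval_finsetSum, mul_sum, mul_sum, ← sum_sub_distrib]
  refine sum_congr rfl fun j hj => ?_
  have hzj := sub_ne_zero.mpr (hz j hj)
  rw [derivative_C_mul, eval_mul, eval_C, eval_derivative_divByMonic_X_sub_C_of_ne _ (hz j hj),
    eval_divByMonic_X_sub_C_of_ne _ (hz j hj), hP j hj]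
  field_simp
  ring

end SecondKindField

theorem eq_secondKind_of_degree_lt {κ K : Type*} [Field K] {t : Finset κ} {y r : κ → K}
    {Q R : K[X]} (hy : Set.InjOn y t) (hQ : ∀ i ∈ t, Q.eval (y i) = 0) (hQdeg : Q.degree ≤ #t)
    (hR : R.degree < #t) (hr : ∀ i ∈ t, r i * (derivative Q).eval (y i) = R.eval (y i)) :
    R = secondKind t r y Q := by
  have hdeg : (secondKind t r y Q).degree < #t := by
    refine degree_sum_C_mul_lt fun i _ => ?_
    rcases eq_or_ne Q 0 with rfl | hQ0
    · simp
    · exact (degree_divByMonic_lt _ _ hQ0 (by simp)).trans_le hQdeg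
  refine sub_eq_zero.mp (eq_zero_of_degree_lt_of_eval_index_eq_zero t hy
    ((degree_sub_le _ _).trans_lt (max_lt hR hdeg)) fun i hi => ?_)
  rw [eval_sub, eval_secondKind_at_node r hy hQ hi, hr i hi, sub_self]

theorem eval_eq_mul_sum_div_of_degree_lt {κ K : Type*} [Field K] {t : Finset κ} {y : κ → K}
    {Q R : K[X]} (hy : Set.InjOn y t) (hQ : ∀ i ∈ t, Q.eval (y i) = 0)
    (hQ' : ∀ i ∈ t, (derivative Q).eval (y i) ≠ 0) (hQdeg : Q.degree ≤ #t) (hR : R.degree < #t)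
    {z : K} (hz : ∀ i ∈ t, z ≠ y i) :
    R.eval z = Q.eval z * ∑ i ∈ t, R.eval (y i) / ((derivative Q).eval (y i) * (z - y i)) := by
  have h := congrArg (eval z) (eq_secondKind_of_degree_lt hy hQ hQdeg hR
    (r := fun i => R.eval (y i) / (derivative Q).eval (y i))
    fun i hi => div_mul_cancel₀ _ (hQ' i hi))
  rw [h, eval_secondKind_not_at_node _ hQ hz]
  simp_rw [div_div]

theorem _root_.Lagrange.nodal_divByMonic_X_sub_C {ι R : Type*} [CommRing R] [DecidableEq ι]
    {s : Finset ι} {x : ι → R} {j : ι} (hj : j ∈ s) :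
    Lagrange.nodal s x /ₘ (X - C (x j)) = Lagrange.nodal (s.erase j) x := by
  rw [Lagrange.nodal_eq_mul_nodal_erase hj, mul_divByMonic_cancel_left _ (monic_X_sub_C _)]

theorem degree_nodal_divByMonic_sub_secondKind_lt {ι R : Type*} [CommRing R] [Nontrivial R]
    [DecidableEq ι] {s : Finset ι} {w x : ι → R} (hw : ∑ j ∈ s, w j = 1) {j : ι} (hj : j ∈ s) :
    (Lagrange.nodal s x /ₘ (X - C (x j)) - secondKind s w x (Lagrange.nodal s x)).degree <
      ↑(#s - 1) := by
  have hsplit : Lagrange.nodal s x /ₘ (X - C (x j)) - secondKind s w x (Lagrange.nodal s x) =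
      ∑ k ∈ s, C (w k) * (Lagrange.nodal (s.erase j) x - Lagrange.nodal (s.erase k) x) := by
    simp only [secondKind, mul_sub, sum_sub_distrib, ← sum_mul, ← map_sum, hw, map_one, one_mul,
      Lagrange.nodal_divByMonic_X_sub_C hj]
    exact congrArg _ (sum_congr rfl fun k hk => by rw [Lagrange.nodal_divByMonic_X_sub_C hk])
  have hdeg : ∀ k ∈ s, (Lagrange.nodal (s.erase k) x).degree = ↑(#s - 1) := fun k hk => by
    rw [Lagrange.degree_nodal, card_erase_of_mem hk]
  rw [hsplit]
  refine degree_sum_C_mul_lt fun k hk => (degree_sub_lt_left ((hdeg j hj).trans (hdeg k hk).symm)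
    Lagrange.nodal_ne_zero ?_).trans_eq (hdeg j hj)
  rw [Lagrange.nodal_monic.leadingCoeff, Lagrange.nodal_monic.leadingCoeff]

end Polynomial

section ThreeTermRecurrence

variable {R : Type*} [CommRing R] {p q : ℕ → R[X]} {a b : ℕ → R}

theorem christoffel_darboux (hrec0 : X * p 0 = C (a 1) * p 1 + C (b 0) * p 0)
    (hrec : ∀ m, X * p (m + 1) =
      C (a (m + 2)) * p (m + 2) + C (b (m + 1)) * p (m + 1) + C (a (m + 1)) * p m)
    (m : ℕ) (u v : R) :
    (u - v) * ∑ i ∈ range (m + 1), (p i).eval u * (p i).eval v =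
      a (m + 1) * ((p (m + 1)).eval u * (p m).eval v - (p m).eval u * (p (m + 1)).eval v) := by
  induction m with
  | zero =>
    have hu := congrArg (eval u) hrec0
    have hv := congrArg (eval v) hrec0
    simp only [eval_mul, eval_add, eval_X, eval_C] at hu hv
    rw [sum_range_one]
    linear_combination (p 0).eval v * hu - (p 0).eval u * hv
  | succ m ih =>
    have hu := congrArg (eval u) (hrec m)
    have hv := congrArg (eval v) (hrec m)
    simp only [eval_mul, eval_add, eval_X, eval_C] at hu hv
    rw [sum_range_succ, mul_add, ih]
    linear_combination (p (m + 1)).eval v * hu - (p (m + 1)).eval u * hv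

theorem casorati
    (hrec : ∀ m, X * p (m + 1) =
      C (a (m + 2)) * p (m + 2) + C (b (m + 1)) * p (m + 1) + C (a (m + 1)) * p m)
    (hqrec0 : X * q 0 = C (a 2) * q 1 + C (b 1) * q 0)
    (hqrec : ∀ m, X * q (m + 1) =
      C (a (m + 3)) * q (m + 2) + C (b (m + 2)) * q (m + 1) + C (a (m + 2)) * q m)
    (m : ℕ) :
    C (a (m + 2)) * (p (m + 2) * q m - p (m + 1) * q (m + 1)) = -(C (a 1) * p 0 * q 0) := by
  induction m with
  | zero => linear_combination p 1 * hqrec0 - q 0 * hrec 0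
  | succ m ih => linear_combination ih + p (m + 2) * hqrec m - q (m + 1) * hrec (m + 1)

end ThreeTermRecurrence

theorem sum_mul_mul_eq_ite_of_card_eq {R ι : Type*} [CommRing R] [DecidableEq ι] {s : Finset ι}
    {n : ℕ} (hs : #s = n) {f : ℕ → ι → R} {w : ι → R}
    (h : ∀ j ∈ s, ∀ k ∈ s, w k * ∑ i ∈ range n, f i j * f i k = if j = k then 1 else 0)
    {i l : ℕ} (hi : i < n) (hl : l < n) :
    ∑ j ∈ s, w j * f i j * f l j = if i = l then 1 else 0 := by
  let M : Matrix s (Fin n) R := fun j i => f i j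
  let N : Matrix (Fin n) s R := fun i k => f i k * w k
  have hMN : M * N = 1 := by
    ext j k
    have hjk : (if j = k then (1 : R) else 0) = if (j : ι) = k then 1 else 0 := by
      simp only [Subtype.ext_iff]
    rw [Matrix.mul_apply, Matrix.one_apply, hjk, ← h j j.2 k k.2, mul_sum,
      ← Fin.sum_univ_eq_sum_range (fun i => w k * (f i j * f i k))]
    exact sum_congr rfl fun _ _ => by simp only [M, N]; ring
  have hNM := congrFun (congrFun
    ((Matrix.mul_eq_one_comm_of_card_eq _ _ _ (by simp [hs])).1 hMN) ⟨i, hi⟩) ⟨l, hl⟩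
  rw [Matrix.mul_apply, Matrix.one_apply, sum_coe_sort s fun j => f i j * w j * f l j] at hNM
  simpa [mul_comm (w _)] using hNM

section OrthogonalPolynomials

variable {p : ℕ → ℝ[X]} {a b : ℕ → ℝ}

theorem sum_range_eval_sq_pos (hp0 : p 0 = 1) {n : ℕ} (hn : 0 < n) (z : ℝ) :
    0 < ∑ i ∈ range n, (p i).eval z ^ 2 :=
  sum_pos' (fun _ _ => sq_nonneg _) ⟨0, mem_range.2 hn, by simp [hp0]⟩

theorem sum_christoffel_mul_eval {ι : Type*} (hp0 : p 0 = 1)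
    (hrec0 : X * p 0 = C (a 1) * p 1 + C (b 0) * p 0)
    (hrec : ∀ m, X * p (m + 1) =
      C (a (m + 2)) * p (m + 2) + C (b (m + 1)) * p (m + 1) + C (a (m + 1)) * p m)
    {s : Finset ι} {x lam : ι → ℝ} {n : ℕ} (hs : #s = n) (hx : Set.InjOn x s)
    (hroot : ∀ j ∈ s, (p n).eval (x j) = 0)
    (hlam : ∀ j ∈ s, lam j = (∑ i ∈ range n, (p i).eval (x j) ^ 2)⁻¹) {k : ℕ} (hk : k < n) :
    ∑ j ∈ s, lam j * (p k).eval (x j) = if k = 0 then 1 else 0 := by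
  classical
  have hn : 0 < n := by omega
  have h := sum_mul_mul_eq_ite_of_card_eq hs (f := fun i j => (p i).eval (x j)) (w := lam) ?_ hk hn
  · simpa [hp0] using h
  intro j hj l hl
  split_ifs with hjl
  · subst hjl
    rw [hlam j hj]
    simp_rw [← sq]
    exact inv_mul_cancel₀ (sum_range_eval_sq_pos hp0 hn _).ne'
  · have hCD := christoffel_darboux hrec0 hrec (n - 1) (x j) (x l)
    rw [Nat.sub_add_cancel hn, hroot j hj, hroot l hl, zero_mul, mul_zero, sub_zero,
      mul_zero] at hCD
    rw [(mul_eq_zero.1 hCD).resolve_left (sub_ne_zero.2 ((hx.ne_iff hj hl).2 hjl)), mul_zero]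

theorem sum_mul_eq_of_sum_mul_eval {ι : Type*} (hp0 : p 0 = 1)
    (hrec0 : X * p 0 = C (a 1) * p 1 + C (b 0) * p 0) {s : Finset ι} {x w : ι → ℝ}
    (h0 : ∑ j ∈ s, w j * (p 0).eval (x j) = 1) (h1 : ∑ j ∈ s, w j * (p 1).eval (x j) = 0) :
    ∑ j ∈ s, w j * x j = b 0 := by
  have hx : ∀ j ∈ s, w j * x j = b 0 * (w j * (p 0).eval (x j)) + a 1 * (w j * (p 1).eval (x j)) :=
    fun j _ => by
      have := congrArg (eval (x j)) hrec0
      simp only [eval_mul, eval_add, eval_X, eval_C, hp0, eval_one] at this ⊢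
      linear_combination w j * this
  rw [sum_congr rfl hx, sum_add_distrib, ← mul_sum, ← mul_sum, h0, h1, mul_zero, mul_one, add_zero]

theorem eq_one_of_degree_eq_zero_of_integral_mul_self {μ : Measure ℝ} [IsProbabilityMeasure μ]
    {P : ℝ[X]} (hdeg : P.degree = 0) (hlead : 0 < P.leadingCoeff)
    (hnorm : ∫ t, P.eval t * P.eval t ∂μ = 1) : P = 1 := by
  obtain ⟨c, rfl⟩ : ∃ c, P = C c := ⟨_, eq_C_of_degree_le_zero hdeg.le⟩
  rw [leadingCoeff_C] at hlead
  simp only [eval_C, integral_const, probReal_univ, one_smul] at hnorm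
  rw [show c = 1 by nlinarith, C_1]

end OrthogonalPolynomials

theorem eq_C_mul_secondKind {ι R : Type*} [CommRing R] [IsDomain R] {p q : ℕ → R[X]}
    {a b : ℕ → R} (hp0 : p 0 = 1) (hq0 : q 0 = 1) (ha : ∀ m, 2 ≤ m → a m ≠ 0)
    (hrec0 : X * p 0 = C (a 1) * p 1 + C (b 0) * p 0)
    (hrec : ∀ m, X * p (m + 1) =
      C (a (m + 2)) * p (m + 2) + C (b (m + 1)) * p (m + 1) + C (a (m + 1)) * p m)
    (hqrec0 : X * q 0 = C (a 2) * q 1 + C (b 1) * q 0)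
    (hqrec : ∀ m, X * q (m + 1) =
      C (a (m + 3)) * q (m + 2) + C (b (m + 2)) * q (m + 1) + C (a (m + 2)) * q m)
    {s : Finset ι} {w x : ι → R} {N : ℕ}
    (hquad : ∀ k < N, ∑ j ∈ s, w j * (p k).eval (x j) = if k = 0 then 1 else 0) :
    ∀ m < N, q m = C (a 1) * secondKind s w x (p (m + 1)) := by
  set T : ℕ → R[X] := fun m => C (a 1) * secondKind s w x (p m)
  have hCa : ∀ m, 2 ≤ m → (C (a m) : R[X]) ≠ 0 := fun m hm => C_ne_zero.2 (ha m hm)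
  have hT0 : T 0 = 0 := by simp only [T, hp0, secondKind_one, mul_zero]
  -- The quadrature rule kills the constant produced by `secondKind_X_mul`, so `T (m + 1)` obeys
  -- the recurrence of `q m`.
  have hstep : ∀ m, m + 1 < N →
      X * T (m + 1) =
        C (a (m + 2)) * T (m + 2) + C (b (m + 1)) * T (m + 1) + C (a (m + 1)) * T m := by
    intro m hm
    have h := congrArg (secondKind s w x) (hrec m)
    rw [secondKind_X_mul, hquad (m + 1) hm, if_neg m.succ_ne_zero, C_0, add_zero, secondKind_add,
      secondKind_add, secondKind_C_mul, secondKind_C_mul, secondKind_C_mul] at h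
    simp only [T]
    linear_combination C (a 1) * h
  suffices h : ∀ m < N, q m = T (m + 1) from h
  intro m
  induction m using Nat.strong_induction_on with
  | _ m ih =>
  intro hm
  match m, ih with
  | 0, _ =>
    have h := congrArg (secondKind s w x) hrec0
    rw [secondKind_X_mul, hquad 0 hm, if_pos rfl, secondKind_add, secondKind_C_mul,
      secondKind_C_mul, hp0, secondKind_one, C_1] at h
    rw [hq0]
    linear_combination h
  | 1, ih =>
    refine mul_left_cancel₀ (hCa 2 le_rfl) ?_
    have h := hstep 0 hm
    rw [hT0, ← ih 0 one_pos (by omega)] at h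
    linear_combination h - hqrec0
  | k + 2, ih =>
    refine mul_left_cancel₀ (hCa (k + 3) (by omega)) ?_
    have h := hstep (k + 1) hm
    rw [← ih k (by omega) (by omega), ← ih (k + 1) (by omega) (by omega)] at h
    linear_combination h - hqrec k

theorem sum_div_eq_zero_and_christoffel_eq {ι K : Type*} [Field K] {p q : ℕ → K[X]}
    {a b : ℕ → K} (hp0 : p 0 = 1) (hq0 : q 0 = 1)
    (hrec : ∀ m, X * p (m + 1) =
      C (a (m + 2)) * p (m + 2) + C (b (m + 1)) * p (m + 1) + C (a (m + 1)) * p m)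
    (hqrec0 : X * q 0 = C (a 2) * q 1 + C (b 1) * q 0)
    (hqrec : ∀ m, X * q (m + 1) =
      C (a (m + 3)) * q (m + 2) + C (b (m + 2)) * q (m + 1) + C (a (m + 2)) * q m)
    (ha1 : a 1 ≠ 0) {n : ℕ} (hn : 2 ≤ n) {s : Finset ι} {w x : ι → K}
    (hq : q (n - 1) = C (a 1) * secondKind s w x (p n)) (hpx : ∀ j ∈ s, (p n).eval (x j) = 0)
    {z : K} (hz : ∀ j ∈ s, z ≠ x j) (hqz : (q (n - 1)).eval z = 0) :
    ∑ j ∈ s, w j / (z - x j) = 0 ∧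
      a n * (derivative (q (n - 1))).eval z * (q (n - 2)).eval z =
        a 1 ^ 2 * ∑ j ∈ s, w j / (z - x j) ^ 2 := by
  have hcas : a n * (p n).eval z * (q (n - 2)).eval z = -a 1 := by
    have h := congrArg (eval z) (casorati hrec hqrec0 hqrec (n - 2))
    rw [show n - 2 + 2 = n by omega, show n - 2 + 1 = n - 1 by omega] at h
    simp only [eval_mul, eval_sub, eval_neg, eval_C, hp0, hq0, eval_one, hqz] at h
    linear_combination h
  have hpz : (p n).eval z ≠ 0 := fun h => ha1 (by rw [h] at hcas; linear_combination hcas)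
  have hG : ∑ j ∈ s, w j / (z - x j) = 0 := by
    rw [hq, eval_mul, eval_C, eval_secondKind_not_at_node w hpx hz] at hqz
    exact (mul_eq_zero.1 ((mul_eq_zero.1 hqz).resolve_left ha1)).resolve_left hpz
  refine ⟨hG, ?_⟩
  rw [hq, derivative_C_mul, eval_mul, eval_C, eval_derivative_secondKind_not_at_node w hpx hz, hG]
  linear_combination (-(a 1) * ∑ j ∈ s, w j / (z - x j) ^ 2) * hcas

theorem sum_div_sq_mul_eq_one_sub {ι κ K : Type*} [Field K] {s : Finset ι} {t : Finset κ}
    {x w : ι → K} {y : κ → K} (hcard : #t + 1 = #s) (hx : Set.InjOn x s) (hy : Set.InjOn y t)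
    (hw : ∑ j ∈ s, w j = 1) (hyx : ∀ i ∈ t, ∀ j ∈ s, y i ≠ x j)
    (hG : ∀ i ∈ t, ∑ j ∈ s, w j / (y i - x j) = 0)
    (hS : ∀ i ∈ t, ∑ j ∈ s, w j / (y i - x j) ^ 2 ≠ 0) {j : ι} (hj : j ∈ s) :
    ∑ i ∈ t, w j / ((y i - x j) ^ 2 * ∑ k ∈ s, w k / (y i - x k) ^ 2) = 1 - w j := by
  classical
  set P := Lagrange.nodal s x
  set Q := secondKind s w x P
  set S := fun i => ∑ k ∈ s, w k / (y i - x k) ^ 2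
  have hPx : ∀ k ∈ s, P.eval (x k) = 0 := fun k hk => Lagrange.eval_nodal_at_node hk
  have hP'x : (derivative P).eval (x j) ≠ 0 := by
    rw [Lagrange.eval_nodal_derivative_eval_node_eq hj]
    exact Lagrange.eval_nodal_not_at_node fun k hk =>
      (hx.ne_iff hj (mem_of_mem_erase hk)).2 (ne_of_mem_erase hk).symm
  have hR : (P /ₘ (X - C (x j)) - Q).degree < #t := by
    simpa [← hcard] using degree_nodal_divByMonic_sub_secondKind_lt (x := x) hw hj
  have hQdeg : Q.degree ≤ #t := by
    have hD : (P /ₘ (X - C (x j))).degree = #t := by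
      rw [Lagrange.nodal_divByMonic_X_sub_C hj, Lagrange.degree_nodal, card_erase_of_mem hj,
        ← hcard, Nat.add_sub_cancel]
    rw [← sub_sub_cancel (P /ₘ (X - C (x j))) Q]
    exact (degree_sub_le _ _).trans (max_le hD.le hR.le)
  have hQy : ∀ i ∈ t, Q.eval (y i) = 0 := fun i hi => by
    rw [eval_secondKind_not_at_node w hPx (hyx i hi), hG i hi, mul_zero]
  have hQ'y : ∀ i ∈ t, (derivative Q).eval (y i) = -(P.eval (y i) * S i) := fun i hi => by
    rw [eval_derivative_secondKind_not_at_node w hPx (hyx i hi), hG i hi, mul_zero, zero_sub]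
  have hPy : ∀ i ∈ t, P.eval (y i) ≠ 0 := fun i hi => Lagrange.eval_nodal_not_at_node (hyx i hi)
  have hxy : ∀ i ∈ t, x j ≠ y i := fun i hi => (hyx i hi j hj).symm
  have heval := eval_eq_mul_sum_div_of_degree_lt hy hQy
    (fun i hi => by rw [hQ'y i hi]; exact neg_ne_zero.2 (mul_ne_zero (hPy i hi) (hS i hi)))
    hQdeg hR hxy
  have hterm : ∀ i ∈ t, (P /ₘ (X - C (x j)) - Q).eval (y i) /
      ((derivative Q).eval (y i) * (x j - y i)) = ((y i - x j) ^ 2 * S i)⁻¹ := fun i hi => by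
    rw [eval_sub, hQy i hi, eval_divByMonic_X_sub_C_of_ne _ (hyx i hi j hj), hPx j hj, hQ'y i hi]
    have := sub_ne_zero.mpr (hyx i hi j hj)
    have := sub_ne_zero.mpr (hxy i hi)
    have := hPy i hi
    have : S i ≠ 0 := hS i hi
    field_simp
    ring
  rw [sum_congr rfl hterm, eval_sub, eval_divByMonic_X_sub_C_self,
    eval_secondKind_at_node w hx hPx hj] at heval
  simp_rw [div_eq_mul_inv (w j), ← mul_sum]
  apply mul_right_cancel₀ hP'x
  linear_combination -heval

theorem doublyStochastic_of_stieltjes_zeros {n : ℕ} (hn : 1 ≤ n) {x w y : ℕ → ℝ}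
    {B : ℕ → ℕ → ℝ} (hx : Set.InjOn x (Icc 1 n)) (hy : Set.InjOn y (Icc 1 (n - 1)))
    (hw : ∀ j ∈ Icc 1 n, 0 < w j) (hw1 : ∑ j ∈ Icc 1 n, w j = 1)
    (hyx : ∀ i ∈ Icc 1 (n - 1), ∀ j ∈ Icc 1 n, y i ≠ x j)
    (hG : ∀ i ∈ Icc 1 (n - 1), ∑ j ∈ Icc 1 n, w j / (y i - x j) = 0)
    (hB : ∀ i j, 1 ≤ i → i ≤ n - 1 → 1 ≤ j → j ≤ n →
      B i j = w j / ((y i - x j) ^ 2 * ∑ k ∈ Icc 1 n, w k / (y i - x k) ^ 2))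
    (hBn : ∀ j, 1 ≤ j → j ≤ n → B n j = w j) :
    (∀ i j, 1 ≤ i → i ≤ n → 1 ≤ j → j ≤ n → 0 ≤ B i j) ∧
    (∀ i, 1 ≤ i → i ≤ n → ∑ j ∈ Icc 1 n, B i j = 1) ∧
    (∀ j, 1 ≤ j → j ≤ n → ∑ i ∈ Icc 1 n, B i j = 1) ∧
    (∀ i, 1 ≤ i → i ≤ n - 1 → y i = ∑ j ∈ Icc 1 n, B i j * x j) := by
  set S := fun i => ∑ k ∈ Icc 1 n, w k / (y i - x k) ^ 2
  have hS : ∀ i ∈ Icc 1 (n - 1), 0 < S i := fun i hi =>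
    sum_pos (fun j hj => div_pos (hw j hj) (pow_two_pos_of_ne_zero (sub_ne_zero.2 (hyx i hi j hj))))
      ⟨1, mem_Icc.2 ⟨le_rfl, hn⟩⟩
  have hrow : ∀ i ∈ Icc 1 (n - 1), ∑ j ∈ Icc 1 n, w j / ((y i - x j) ^ 2 * S i) = 1 := by
    intro i hi
    simp_rw [← div_div, ← sum_div]
    exact div_self (hS i hi).ne'
  have hBt : ∀ i ∈ Icc 1 (n - 1), ∀ j ∈ Icc 1 n, B i j = w j / ((y i - x j) ^ 2 * S i) :=
    fun i hi j hj => hB i j (mem_Icc.1 hi).1 (mem_Icc.1 hi).2 (mem_Icc.1 hj).1 (mem_Icc.1 hj).2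
  have hBn' : ∀ j ∈ Icc 1 n, B n j = w j := fun j hj => hBn j (mem_Icc.1 hj).1 (mem_Icc.1 hj).2
  refine ⟨fun i j hi hin hj hjn => ?_, fun i hi hin => ?_, fun j hj hjn => ?_, fun i hi hin => ?_⟩
  · have hj' := mem_Icc.2 ⟨hj, hjn⟩
    rcases hin.lt_or_eq with hin | rfl
    · have hi' := mem_Icc.2 ⟨hi, Nat.le_sub_one_of_lt hin⟩
      rw [hBt i hi' j hj']
      exact div_nonneg (hw j hj').le (mul_nonneg (sq_nonneg _) (hS i hi').le)
    · rw [hBn' j hj']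
      exact (hw j hj').le
  · rcases hin.lt_or_eq with hin | rfl
    · have hi' := mem_Icc.2 ⟨hi, Nat.le_sub_one_of_lt hin⟩
      rw [sum_congr rfl (hBt i hi'), hrow i hi']
    · rw [sum_congr rfl hBn', hw1]
  · have hj' := mem_Icc.2 ⟨hj, hjn⟩
    have hsplit := sum_Icc_succ_top (a := 1) (b := n - 1) (by omega) fun i => B i j
    rw [Nat.sub_add_cancel hn] at hsplit
    rw [hsplit, hBn' j hj', sum_congr rfl fun i hi => hBt i hi j hj',
      sum_div_sq_mul_eq_one_sub (by simp; omega) hx hy hw1 hyx hG (fun i hi => (hS i hi).ne') hj',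
      sub_add_cancel]
  · have hi' := mem_Icc.2 ⟨hi, hin⟩
    have hterm : ∀ j ∈ Icc 1 n, B i j * x j =
        y i * (w j / ((y i - x j) ^ 2 * S i)) - w j / (y i - x j) / S i := fun j hj => by
      have := sub_ne_zero.2 (hyx i hi' j hj)
      have := (hS i hi').ne'
      rw [hBt i hi' j hj]
      field_simp
      ring
    rw [sum_congr rfl hterm, sum_sub_distrib, ← mul_sum, hrow i hi', ← sum_div, hG i hi',
      zero_div, sub_zero, mul_one]

theorem strictMonoOn_Icc_of_lt_add_one_s8 {α : Type*} [Preorder α] {f : ℕ → α} {n : ℕ}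
    (hf : ∀ j, 1 ≤ j → j + 1 ≤ n → f j < f (j + 1)) : StrictMonoOn f (Icc 1 n : Finset ℕ) := by
  rw [coe_Icc]
  exact strictMonoOn_of_lt_add_one Set.ordConnected_Icc fun j _ hj hj1 => hf j hj.1 hj1.2

theorem ne_of_interlace {α : Type*} [Preorder α] {f g : ℕ → α} {n : ℕ}
    (hf : ∀ j, 1 ≤ j → j + 1 ≤ n → f j < f (j + 1))
    (hfg : ∀ i, 1 ≤ i → i ≤ n - 1 → f i < g i ∧ g i < f (i + 1)) :
    ∀ i ∈ Icc 1 (n - 1), ∀ j ∈ Icc 1 n, g i ≠ f j := by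
  intro i hi j hj
  have hmono := (strictMonoOn_Icc_of_lt_add_one_s8 hf).monotoneOn
  rw [mem_Icc] at hi hj
  have ⟨hlt, hlt'⟩ := hfg i hi.1 hi.2
  rcases le_or_gt j i with hji | hij
  · exact ne_of_gt ((hmono (by simpa using hj) (by simp; omega) hji).trans_lt hlt)
  · exact ne_of_lt (hlt'.trans_le (hmono (by simp; omega) (by simpa using hj) hij))

theorem stmt_8_general
    (μ : Measure ℝ) [IsProbabilityMeasure μ]
    (p : ℕ → Polynomial ℝ)
    (hdeg : ∀ m : ℕ, (p m).degree = m)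
    (hlead : ∀ m : ℕ, 0 < (p m).leadingCoeff)
    (horth : ∀ m l : ℕ, ∫ t, (p m).eval t * (p l).eval t ∂μ = if m = l then 1 else 0)
    (a b : ℕ → ℝ)
    (hapos : ∀ m : ℕ, 1 ≤ m → 0 < a m)
    (hrec0 : Polynomial.X * p 0 = Polynomial.C (a 1) * p 1 + Polynomial.C (b 0) * p 0)
    (hrec : ∀ m : ℕ, Polynomial.X * p (m + 1) =
      Polynomial.C (a (m + 2)) * p (m + 2) + Polynomial.C (b (m + 1)) * p (m + 1) +
        Polynomial.C (a (m + 1)) * p m)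
    (x : ℕ → ℕ → ℝ)
    (hxroot : ∀ m j : ℕ, 1 ≤ j → j ≤ m → (p m).eval (x m j) = 0)
    (hxmono : ∀ m j : ℕ, 1 ≤ j → j + 1 ≤ m → x m j < x m (j + 1))
    (lam : ℕ → ℕ → ℝ)
    (hlam : ∀ m j : ℕ, lam m j = (∑ i ∈ Finset.range m, ((p i).eval (x m j)) ^ 2)⁻¹)
    (q : ℕ → Polynomial ℝ)
    (hq0 : q 0 = 1)
    (hqrec0 : Polynomial.X * q 0 = Polynomial.C (a 2) * q 1 + Polynomial.C (b 1) * q 0)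
    (hqrec : ∀ m : ℕ, Polynomial.X * q (m + 1) =
      Polynomial.C (a (m + 3)) * q (m + 2) + Polynomial.C (b (m + 2)) * q (m + 1) +
        Polynomial.C (a (m + 2)) * q m)
    (y : ℕ → ℕ → ℝ)
    (hyroot : ∀ m j : ℕ, 1 ≤ j → j ≤ m → (q m).eval (y m j) = 0)
    (hymono : ∀ m j : ℕ, 1 ≤ j → j + 1 ≤ m → y m j < y m (j + 1))
    (hxy : ∀ m j : ℕ, 1 ≤ j → j ≤ m → x (m + 1) j < y m j ∧ y m j < x (m + 1) (j + 1))
    (lam1 : ℕ → ℕ → ℝ)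
    (hlam1 : ∀ m i : ℕ, 1 ≤ i → i ≤ m → lam1 m i =
      (a (m + 1) * ((Polynomial.derivative (q m)).eval (y m i)) * ((q (m - 1)).eval (y m i)))⁻¹)
    (n : ℕ) (hn : 2 ≤ n)
    (B : ℕ → ℕ → ℝ)
    (hB1 : ∀ i j : ℕ, 1 ≤ i → i ≤ n - 1 → 1 ≤ j → j ≤ n →
      B i j = a 1 ^ 2 * lam n j * lam1 (n - 1) i / (y (n - 1) i - x n j) ^ 2)
    (hB2 : ∀ j : ℕ, 1 ≤ j → j ≤ n → B n j = lam n j) :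
    (∀ i j : ℕ, 1 ≤ i → i ≤ n → 1 ≤ j → j ≤ n → 0 ≤ B i j) ∧
    (∀ i : ℕ, 1 ≤ i → i ≤ n → ∑ j ∈ Finset.Icc 1 n, B i j = 1) ∧
    (∀ j : ℕ, 1 ≤ j → j ≤ n → ∑ i ∈ Finset.Icc 1 n, B i j = 1) ∧
    (∀ i : ℕ, 1 ≤ i → i ≤ n - 1 → y (n - 1) i = ∑ j ∈ Finset.Icc 1 n, B i j * x n j) ∧
    b 0 = ∑ j ∈ Finset.Icc 1 n, B n j * x n j := by
  have hn1 : n - 1 + 1 = n := by omega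
  have hp0 : p 0 = 1 := eq_one_of_degree_eq_zero_of_integral_mul_self (μ := μ)
    (by simpa using hdeg 0) (hlead 0) (by simpa using horth 0 0)
  have hx := strictMonoOn_Icc_of_lt_add_one_s8 (hxmono n)
  have hyx := ne_of_interlace (hxmono n) (by simpa [hn1] using hxy (n - 1))
  have hpx : ∀ j ∈ Icc 1 n, (p n).eval (x n j) = 0 :=
    fun j hj => hxroot n j (mem_Icc.1 hj).1 (mem_Icc.1 hj).2
  have hquad : ∀ k < n, ∑ j ∈ Icc 1 n, lam n j * (p k).eval (x n j) = if k = 0 then 1 else 0 :=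
    fun k hk => sum_christoffel_mul_eval hp0 hrec0 hrec (by simp) hx.injOn
      hpx (fun j _ => hlam n j) hk
  have hq : q (n - 1) = C (a 1) * secondKind (Icc 1 n) (lam n) (x n) (p n) := by
    simpa [hn1] using eq_C_mul_secondKind hp0 hq0 (fun m hm => (hapos m (by omega)).ne') hrec0 hrec
      hqrec0 hqrec hquad (n - 1) (by omega)
  have hzero := fun i (hi : i ∈ Icc 1 (n - 1)) => sum_div_eq_zero_and_christoffel_eq hp0 hq0 hrec
    hqrec0 hqrec (hapos 1 le_rfl).ne' hn hq hpx (hyx i hi)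
    (hyroot (n - 1) i (mem_Icc.1 hi).1 (mem_Icc.1 hi).2)
  obtain ⟨hnonneg, hrow, hcol, hbary⟩ := doublyStochastic_of_stieltjes_zeros (by omega)
    hx.injOn (strictMonoOn_Icc_of_lt_add_one_s8 (hymono (n - 1))).injOn
    (fun j _ => (hlam n j).symm ▸ inv_pos.2 (sum_range_eval_sq_pos hp0 (by omega) _))
    (by simpa [hp0] using hquad 0 (by omega)) hyx (fun i hi => (hzero i hi).1)
    (fun i j hi hin hj hjn => by
      rw [hB1 i j hi hin hj hjn, hlam1 (n - 1) i hi hin, hn1, show n - 1 - 1 = n - 2 by omega,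
        (hzero i (mem_Icc.2 ⟨hi, hin⟩)).2]
      have := (hapos 1 le_rfl).ne'
      field_simp) hB2
  refine ⟨hnonneg, hrow, hcol, hbary, ?_⟩
  rw [sum_congr rfl fun j hj => by rw [hB2 j (mem_Icc.1 hj).1 (mem_Icc.1 hj).2]]
  exact (sum_mul_eq_of_sum_mul_eval hp0 hrec0 (by simpa [hp0] using hquad 0 (by omega))
    (by simpa using hquad 1 (by omega))).symm

theorem stmt_8
    (μ : Measure ℝ) [IsProbabilityMeasure μ]
    (lo hi : ℝ)
    (hsupp : μ (Set.Icc lo hi)ᶜ = 0)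
    (hinf : ∀ s : Finset ℝ, μ (↑s : Set ℝ)ᶜ ≠ 0)
    (p : ℕ → Polynomial ℝ)
    (hdeg : ∀ m : ℕ, (p m).degree = m)
    (hlead : ∀ m : ℕ, 0 < (p m).leadingCoeff)
    (horth : ∀ m l : ℕ, ∫ t, (p m).eval t * (p l).eval t ∂μ = if m = l then 1 else 0)
    (a b : ℕ → ℝ)
    (hapos : ∀ m : ℕ, 1 ≤ m → 0 < a m)
    (hrec0 : Polynomial.X * p 0 = Polynomial.C (a 1) * p 1 + Polynomial.C (b 0) * p 0)
    (hrec : ∀ m : ℕ, Polynomial.X * p (m + 1) =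
      Polynomial.C (a (m + 2)) * p (m + 2) + Polynomial.C (b (m + 1)) * p (m + 1) +
        Polynomial.C (a (m + 1)) * p m)
    (x : ℕ → ℕ → ℝ)
    (hxroot : ∀ m j : ℕ, 1 ≤ j → j ≤ m → (p m).eval (x m j) = 0)
    (hxmono : ∀ m j : ℕ, 1 ≤ j → j + 1 ≤ m → x m j < x m (j + 1))
    (lam : ℕ → ℕ → ℝ)
    (hlam : ∀ m j : ℕ, lam m j = (∑ i ∈ Finset.range m, ((p i).eval (x m j)) ^ 2)⁻¹)
    (q : ℕ → Polynomial ℝ)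
    (hq0 : q 0 = 1)
    (hqrec0 : Polynomial.X * q 0 = Polynomial.C (a 2) * q 1 + Polynomial.C (b 1) * q 0)
    (hqrec : ∀ m : ℕ, Polynomial.X * q (m + 1) =
      Polynomial.C (a (m + 3)) * q (m + 2) + Polynomial.C (b (m + 2)) * q (m + 1) +
        Polynomial.C (a (m + 2)) * q m)
    (y : ℕ → ℕ → ℝ)
    (hyroot : ∀ m j : ℕ, 1 ≤ j → j ≤ m → (q m).eval (y m j) = 0)
    (hymono : ∀ m j : ℕ, 1 ≤ j → j + 1 ≤ m → y m j < y m (j + 1))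
    (hxy : ∀ m j : ℕ, 1 ≤ j → j ≤ m → x (m + 1) j < y m j ∧ y m j < x (m + 1) (j + 1))
    (lam1 : ℕ → ℕ → ℝ)
    (hlam1 : ∀ m i : ℕ, 1 ≤ i → i ≤ m → lam1 m i =
      (a (m + 1) * ((Polynomial.derivative (q m)).eval (y m i)) * ((q (m - 1)).eval (y m i)))⁻¹)
    (n : ℕ) (hn : 2 ≤ n)
    (B : ℕ → ℕ → ℝ)
    (hB1 : ∀ i j : ℕ, 1 ≤ i → i ≤ n - 1 → 1 ≤ j → j ≤ n →
      B i j = a 1 ^ 2 * lam n j * lam1 (n - 1) i / (y (n - 1) i - x n j) ^ 2)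
    (hB2 : ∀ j : ℕ, 1 ≤ j → j ≤ n → B n j = lam n j) :
    (∀ i j : ℕ, 1 ≤ i → i ≤ n → 1 ≤ j → j ≤ n → 0 ≤ B i j) ∧
    (∀ i : ℕ, 1 ≤ i → i ≤ n → ∑ j ∈ Finset.Icc 1 n, B i j = 1) ∧
    (∀ j : ℕ, 1 ≤ j → j ≤ n → ∑ i ∈ Finset.Icc 1 n, B i j = 1) ∧
    (∀ i : ℕ, 1 ≤ i → i ≤ n - 1 → y (n - 1) i = ∑ j ∈ Finset.Icc 1 n, B i j * x n j) ∧
    b 0 = ∑ j ∈ Finset.Icc 1 n, B n j * x n j :=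
  stmt_8_general μ p hdeg hlead horth a b hapos hrec0 hrec x hxroot hxmono lam hlam q hq0 hqrec0
    hqrec y hyroot hymono hxy lam1 hlam1 n hn B hB1 hB2
end

section
/- Fix n ≥ 2 and 1 ≤ j ≤ n. Then p^{(1)}_{n-1}(x_{j,n}) ≠ 0 and a_1² Σ_{i=1}^{n-1} λ^{(1)}_{i,n-1}/(x_{j,n} − y_{i,n-1})² = a_1 · p_n'(x_{j,n})/p^{(1)}_{n-1}(x_{j,n}) − 1. -/
/-
Write `P = p_n`, `Q = p⁽¹⁾_{n-1}`. The Casoratian identity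
`a_n (p_n p⁽¹⁾_{n-2} - p_{n-1} p⁽¹⁾_{n-1}) = -a_1` shows `Q(x_j) ≠ 0` and turns the associated
Christoffel numbers into `a_1² λ⁽¹⁾_i = -a_1 P(y_i) / Q'(y_i)`; comparing top coefficients in the
recurrences gives `lc P / lc Q = 1 / a_1`. The claim is then a partial-fraction identity: writing
`P = (X - x_j) T`, the polynomial `T - (lc P / lc Q) Q` has degree `< n - 1`, so it is its own
Lagrange interpolant at the zeros `y_i` of `Q`; evaluating at `x_j`, where `T(x_j) = P'(x_j)` and
`T(y_i) = P(y_i) / (y_i - x_j)`, gives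
`P'(x_j) / Q(x_j) = 1 / a_1 - ∑ P(y_i) / (Q'(y_i) (x_j - y_i)²)`.
-/

open MeasureTheory Polynomial Finset

namespace Polynomial

variable {F ι : Type*} [Field F]

theorem natDegree_le_of_X_mul_eq {f g h : F[X]} {c : F} (hc : c ≠ 0) (heq : X * f = C c * g + h)
    {n : ℕ} (hf : f.natDegree ≤ n) (hh : h.natDegree ≤ n + 1) : g.natDegree ≤ n + 1 := by
  have hg : g = C c⁻¹ * (X * f - h) := by
    rw [heq, add_sub_cancel_right, ← mul_assoc, ← C_mul, inv_mul_cancel₀ hc, C_1, one_mul]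
  rw [hg]
  refine (natDegree_C_mul_le _ _).trans ((natDegree_sub_le _ _).trans (max_le ?_ hh))
  exact (natDegree_mul_le_of_le natDegree_X_le hf).trans (by omega)

section Interpolation

variable {s : Finset ι} {v : ι → F}

theorem eq_C_leadingCoeff_mul_nodal (hvs : Set.InjOn v s) {Q : F[X]} (hQdeg : Q.natDegree = #s)
    (hQv : ∀ i ∈ s, Q.eval (v i) = 0) : Q = C Q.leadingCoeff * Lagrange.nodal s v := by
  rcases eq_or_ne Q 0 with rfl | hQ
  · simp
  have hlc : Q.leadingCoeff ≠ 0 := leadingCoeff_ne_zero.mpr hQ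
  refine eq_of_degree_le_of_eval_index_eq s hvs ?_ ?_ ?_ fun i hi => ?_
  · rw [degree_eq_natDegree hQ, hQdeg]
  · rw [degree_C_mul hlc, Lagrange.degree_nodal, degree_eq_natDegree hQ, hQdeg]
  · rw [leadingCoeff_mul, leadingCoeff_C, Lagrange.nodal_monic.leadingCoeff, mul_one]
  · rw [hQv i hi, eval_mul, Lagrange.eval_nodal_at_node hi, mul_zero]

theorem eval_eq_mul_sum_of_degree_lt (hvs : Set.InjOn v s) {Q : F[X]} (hQdeg : Q.natDegree = #s)
    (hQv : ∀ i ∈ s, Q.eval (v i) = 0) {D : F[X]} (hD : D.degree < #s) {x : F}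
    (hQx : Q.eval x ≠ 0) :
    D.eval x = Q.eval x * ∑ i ∈ s, D.eval (v i) / ((derivative Q).eval (v i) * (x - v i)) := by
  classical
  have hc : Q.leadingCoeff ≠ 0 := leadingCoeff_ne_zero.mpr (by rintro rfl; simp at hQx)
  have hxv : ∀ i ∈ s, x ≠ v i := fun i hi h => hQx (by rw [h, hQv i hi])
  have hQ := eq_C_leadingCoeff_mul_nodal hvs hQdeg hQv
  have hnodal_lc : (C Q.leadingCoeff * Lagrange.nodal s v).leadingCoeff = Q.leadingCoeff := by
    rw [leadingCoeff_mul, leadingCoeff_C, Lagrange.nodal_monic.leadingCoeff, mul_one]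
  have hweight : ∀ i ∈ s, Lagrange.nodalWeight s v i =
      Q.leadingCoeff / (derivative Q).eval (v i) := fun i hi => by
    rw [Lagrange.nodalWeight_eq_eval_derivative_nodal hi, hQ, derivative_C_mul, eval_mul, eval_C,
      hnodal_lc, div_mul_cancel_left₀ hc]
  have hnodal : (Lagrange.nodal s v).eval x = Q.eval x / Q.leadingCoeff := by
    rw [hQ, eval_mul, eval_C, hnodal_lc, mul_div_cancel_left₀ _ hc]
  rw [congrArg (eval x) (Lagrange.eq_interpolate hvs hD),
    Lagrange.eval_interpolate_not_at_node _ hxv, hnodal,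
    sum_congr rfl fun i hi => by rw [hweight i hi], div_mul_eq_mul_div, mul_sum, mul_sum,
    sum_div]
  refine sum_congr rfl fun i _ => ?_
  field_simp

theorem eval_derivative_div_eval_of_isRoot (hvs : Set.InjOn v s) {P Q : F[X]}
    (hQdeg : Q.natDegree = #s) (hQv : ∀ i ∈ s, Q.eval (v i) = 0) (hPdeg : P.natDegree = #s + 1)
    {x : F} (hPx : P.IsRoot x) (hQx : Q.eval x ≠ 0) :
    (derivative P).eval x / Q.eval x = P.leadingCoeff / Q.leadingCoeff -
      ∑ i ∈ s, P.eval (v i) / ((derivative Q).eval (v i) * (x - v i) ^ 2) := by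
  have hQ : Q ≠ 0 := by rintro rfl; simp at hQx
  have hxv : ∀ i ∈ s, x - v i ≠ 0 := fun i hi h => hQx (by rw [sub_eq_zero.mp h, hQv i hi])
  obtain ⟨T, rfl⟩ := dvd_iff_isRoot.mpr hPx
  have hT : T ≠ 0 := by rintro rfl; simp at hPdeg
  have hTdeg : T.natDegree = #s := by
    rw [natDegree_mul (X_sub_C_ne_zero x) hT, natDegree_X_sub_C] at hPdeg; omega
  rw [leadingCoeff_mul, leadingCoeff_X_sub_C, one_mul]
  set α := T.leadingCoeff / Q.leadingCoeff
  have hα : (C α * Q).leadingCoeff = T.leadingCoeff := by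
    rw [leadingCoeff_mul, leadingCoeff_C, div_mul_cancel₀ _ (leadingCoeff_ne_zero.mpr hQ)]
  have hD : (T - C α * Q).degree < #s := by
    refine (degree_sub_lt_left ?_ hT hα.symm).trans_eq (by rw [degree_eq_natDegree hT, hTdeg])
    rw [degree_C_mul (div_ne_zero (leadingCoeff_ne_zero.mpr hT) (leadingCoeff_ne_zero.mpr hQ)),
      degree_eq_natDegree hT, degree_eq_natDegree hQ, hTdeg, hQdeg]
  have hsum :
      ∑ i ∈ s, ((X - C x) * T).eval (v i) / ((derivative Q).eval (v i) * (x - v i) ^ 2) =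
        -∑ i ∈ s, (T - C α * Q).eval (v i) / ((derivative Q).eval (v i) * (x - v i)) := by
    rw [← sum_neg_distrib]
    refine sum_congr rfl fun i hi => ?_
    simp only [eval_mul, eval_sub, eval_X, eval_C, hQv i hi, mul_zero, sub_zero]
    rw [← neg_sub x (v i), neg_mul, neg_div, sq, ← mul_assoc, mul_comm (x - v i),
      mul_div_mul_right _ _ (hxv i hi)]
  have hderiv : (derivative ((X - C x) * T)).eval x = T.eval x := by simp
  rw [hsum, hderiv, div_eq_iff hQx]
  have h := eval_eq_mul_sum_of_degree_lt hvs hQdeg hQv hD hQx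
  simp only [eval_sub, eval_mul, eval_C] at h ⊢
  linear_combination h

end Interpolation

theorem eq_one_of_degree_eq_zero {μ : Measure ℝ} [IsProbabilityMeasure μ] {P : ℝ[X]}
    (hdeg : P.degree = 0) (hlc : 0 < P.leadingCoeff)
    (hnorm : ∫ t, P.eval t * P.eval t ∂μ = 1) : P = 1 := by
  obtain ⟨c, rfl⟩ : ∃ c, P = C c := ⟨_, eq_C_of_degree_eq_zero hdeg⟩
  simp only [eval_C, integral_const, probReal_univ, one_smul] at hnorm
  rw [leadingCoeff_C] at hlc
  rw [show c = 1 by nlinarith, C_1]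

end Polynomial

def IsThreeTermRecurrence_s14 {K : Type*} [Field K] (a b : ℕ → K) (r : ℕ → K[X]) : Prop :=
  X * r 0 = C (a 1) * r 1 + C (b 0) * r 0 ∧
    ∀ m, X * r (m + 1) =
      C (a (m + 2)) * r (m + 2) + C (b (m + 1)) * r (m + 1) + C (a (m + 1)) * r m

namespace IsThreeTermRecurrence_s14

variable {K ι : Type*} [Field K] {a b : ℕ → K} {r : ℕ → K[X]}

theorem natDegree_le (hr : IsThreeTermRecurrence_s14 a b r) (ha : ∀ m, a (m + 1) ≠ 0)
    (h0 : (r 0).natDegree = 0) : ∀ m, (r m).natDegree ≤ m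
  | 0 => h0.le
  | 1 => natDegree_le_of_X_mul_eq (ha 0) hr.1 h0.le ((natDegree_C_mul_le _ _).trans (by omega))
  | m + 2 => by
    refine natDegree_le_of_X_mul_eq (ha (m + 1)) ((hr.2 m).trans (add_assoc _ _ _))
      (natDegree_le hr ha h0 (m + 1)) ((natDegree_add_le _ _).trans (max_le ?_ ?_)) <;>
    exact (natDegree_C_mul_le _ _).trans ((natDegree_le hr ha h0 _).trans (by omega))

theorem coeff_self_eq (hr : IsThreeTermRecurrence_s14 a b r) (hdeg : ∀ m, (r m).natDegree ≤ m) :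
    ∀ m, (r m).coeff m = a (m + 1) * (r (m + 1)).coeff (m + 1)
  | 0 => by
    have h := congrArg (coeff · 1) hr.1
    simp only [coeff_X_mul, coeff_add, coeff_C_mul] at h
    rw [h, coeff_eq_zero_of_natDegree_lt ((hdeg 0).trans_lt one_pos), mul_zero, add_zero]
  | m + 1 => by
    have h := congrArg (coeff · (m + 2)) (hr.2 m)
    simp only [coeff_X_mul, coeff_add, coeff_C_mul] at h
    rw [h, coeff_eq_zero_of_natDegree_lt ((hdeg _).trans_lt (by omega : m + 1 < m + 2)),
      coeff_eq_zero_of_natDegree_lt ((hdeg _).trans_lt (by omega : m < m + 2))]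
    ring

theorem natDegree_eq (hr : IsThreeTermRecurrence_s14 a b r) (ha : ∀ m, a (m + 1) ≠ 0)
    (h0 : (r 0).natDegree = 0) (hr0 : r 0 ≠ 0) (m : ℕ) : (r m).natDegree = m := by
  have hdeg := hr.natDegree_le ha h0
  refine le_antisymm (hdeg m) (le_natDegree_of_ne_zero ?_)
  induction m with
  | zero => simpa only [leadingCoeff, h0] using leadingCoeff_ne_zero.mpr hr0
  | succ m ih => exact right_ne_zero_of_mul (hr.coeff_self_eq hdeg m ▸ ih)

variable {p q : ℕ → K[X]}

theorem casoratian_eq (hp : IsThreeTermRecurrence_s14 a b p)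
    (hq : IsThreeTermRecurrence_s14 (fun k => a (k + 1)) (fun k => b (k + 1)) q)
    (hp0 : p 0 = 1) (hq0 : q 0 = 1) :
    ∀ m, C (a (m + 2)) * (p (m + 2) * q m - p (m + 1) * q (m + 1)) = -C (a 1)
  | 0 => by
    have h1 := hp.2 0
    have h2 := hq.1
    rw [hp0] at h1
    rw [hq0] at h2 ⊢
    linear_combination p 1 * h2 - h1
  | m + 1 => by
    linear_combination
      p (m + 2) * hq.2 m - q (m + 1) * hp.2 (m + 1) + casoratian_eq hp hq hp0 hq0 m

theorem eval_casoratian_eq (hp : IsThreeTermRecurrence_s14 a b p)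
    (hq : IsThreeTermRecurrence_s14 (fun k => a (k + 1)) (fun k => b (k + 1)) q)
    (hp0 : p 0 = 1) (hq0 : q 0 = 1) (m : ℕ) (z : K) :
    a (m + 2) * ((p (m + 2)).eval z * (q m).eval z - (p (m + 1)).eval z * (q (m + 1)).eval z) =
      -a 1 := by
  simpa using congrArg (eval z) (casoratian_eq hp hq hp0 hq0 m)

theorem eval_ne_zero_of_isRoot (hp : IsThreeTermRecurrence_s14 a b p)
    (hq : IsThreeTermRecurrence_s14 (fun k => a (k + 1)) (fun k => b (k + 1)) q)
    (hp0 : p 0 = 1) (hq0 : q 0 = 1) (ha1 : a 1 ≠ 0) {m : ℕ} {z : K}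
    (hz : (p (m + 2)).IsRoot z) : (q (m + 1)).eval z ≠ 0 := fun h =>
  ha1 (by simpa [hz.eq_zero, h] using (eval_casoratian_eq hp hq hp0 hq0 m z).symm)

theorem sq_mul_christoffel_eq (hp : IsThreeTermRecurrence_s14 a b p)
    (hq : IsThreeTermRecurrence_s14 (fun k => a (k + 1)) (fun k => b (k + 1)) q)
    (hp0 : p 0 = 1) (hq0 : q 0 = 1) (ha1 : a 1 ≠ 0) {m : ℕ} {z : K}
    (hz : (q (m + 1)).IsRoot z) :
    a 1 ^ 2 * (a (m + 2) * (derivative (q (m + 1))).eval z * (q m).eval z)⁻¹ =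
      -(a 1 * ((p (m + 2)).eval z / (derivative (q (m + 1))).eval z)) := by
  have hw := eval_casoratian_eq hp hq hp0 hq0 m z
  rw [hz.eq_zero, mul_zero, sub_zero] at hw
  have hpz : (p (m + 2)).eval z ≠ 0 := fun h => ha1 (by simpa [h] using hw.symm)
  rw [mul_right_comm, mul_inv, show a (m + 2) * (q m).eval z = -a 1 / (p (m + 2)).eval z by
    field_simp; linear_combination hw]
  field_simp

theorem mul_leadingCoeff_succ_eq (hp : IsThreeTermRecurrence_s14 a b p)
    (hq : IsThreeTermRecurrence_s14 (fun k => a (k + 1)) (fun k => b (k + 1)) q)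
    (ha : ∀ m, a (m + 1) ≠ 0) (hp0 : p 0 = 1) (hq0 : q 0 = 1)
    (hpdeg : ∀ m, (p m).natDegree = m) (hqdeg : ∀ m, (q m).natDegree = m) (m : ℕ) :
    a 1 * (p (m + 1)).leadingCoeff = (q m).leadingCoeff := by
  simp only [leadingCoeff, hpdeg, hqdeg]
  induction m with
  | zero => rw [← hp.coeff_self_eq (fun k => (hpdeg k).le) 0, hp0, hq0]
  | succ m ih =>
    refine mul_left_cancel₀ (ha (m + 1)) ?_
    rw [← hq.coeff_self_eq (fun k => (hqdeg k).le) m, ← ih,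
      hp.coeff_self_eq (fun k => (hpdeg k).le) (m + 1)]
    ring

theorem sq_mul_sum_christoffel_div_sq_eq (hp : IsThreeTermRecurrence_s14 a b p)
    (hq : IsThreeTermRecurrence_s14 (fun k => a (k + 1)) (fun k => b (k + 1)) q)
    (ha : ∀ m, a (m + 1) ≠ 0) (hp0 : p 0 = 1) (hq0 : q 0 = 1)
    (hpdeg : ∀ m, (p m).natDegree = m) (hqdeg : ∀ m, (q m).natDegree = m) {m : ℕ}
    {s : Finset ι} (hs : #s = m + 1) {v : ι → K} (hvs : Set.InjOn v s)
    (hv : ∀ i ∈ s, (q (m + 1)).IsRoot (v i)) {ξ : K} (hξ : (p (m + 2)).IsRoot ξ) :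
    a 1 ^ 2 * ∑ i ∈ s, (a (m + 2) * (derivative (q (m + 1))).eval (v i) *
        (q m).eval (v i))⁻¹ / (ξ - v i) ^ 2 =
      a 1 * (derivative (p (m + 2))).eval ξ / (q (m + 1)).eval ξ - 1 := by
  have hkey := eval_derivative_div_eval_of_isRoot hvs (by rw [hqdeg, hs])
    (fun i hi => (hv i hi).eq_zero) (by rw [hpdeg, hs]) hξ
    (hp.eval_ne_zero_of_isRoot hq hp0 hq0 (ha 0) hξ)
  have hP : p (m + 2) ≠ 0 := fun h => by simpa [h] using hpdeg (m + 2)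
  rw [← mul_leadingCoeff_succ_eq hp hq ha hp0 hq0 hpdeg hqdeg,
    div_mul_cancel_right₀ (leadingCoeff_ne_zero.mpr hP)] at hkey
  rw [mul_div_assoc, hkey, mul_sub, mul_inv_cancel₀ (ha 0), sub_sub_cancel_left, mul_sum,
    mul_sum, ← sum_neg_distrib]
  refine sum_congr rfl fun i hi => ?_
  rw [← mul_div_assoc, hp.sq_mul_christoffel_eq hq hp0 hq0 (ha 0) (hv i hi), ← div_div]
  ring

end IsThreeTermRecurrence_s14

theorem stmt_14_general
    (μ : Measure ℝ) [IsProbabilityMeasure μ]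
    (p : ℕ → Polynomial ℝ)
    (hdeg : ∀ m : ℕ, (p m).degree = m)
    (hlead : ∀ m : ℕ, 0 < (p m).leadingCoeff)
    (horth : ∀ m l : ℕ, ∫ t, (p m).eval t * (p l).eval t ∂μ = if m = l then 1 else 0)
    (a b : ℕ → ℝ)
    (hapos : ∀ m : ℕ, 1 ≤ m → 0 < a m)
    (hrec0 : Polynomial.X * p 0 = Polynomial.C (a 1) * p 1 + Polynomial.C (b 0) * p 0)
    (hrec : ∀ m : ℕ, Polynomial.X * p (m + 1) =
      Polynomial.C (a (m + 2)) * p (m + 2) + Polynomial.C (b (m + 1)) * p (m + 1) +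
        Polynomial.C (a (m + 1)) * p m)
    (x : ℕ → ℕ → ℝ)
    (hxroot : ∀ m j : ℕ, 1 ≤ j → j ≤ m → (p m).eval (x m j) = 0)
    (q : ℕ → Polynomial ℝ)
    (hq0 : q 0 = 1)
    (hqrec0 : Polynomial.X * q 0 = Polynomial.C (a 2) * q 1 + Polynomial.C (b 1) * q 0)
    (hqrec : ∀ m : ℕ, Polynomial.X * q (m + 1) =
      Polynomial.C (a (m + 3)) * q (m + 2) + Polynomial.C (b (m + 2)) * q (m + 1) +
        Polynomial.C (a (m + 2)) * q m)
    (y : ℕ → ℕ → ℝ)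
    (hyroot : ∀ m j : ℕ, 1 ≤ j → j ≤ m → (q m).eval (y m j) = 0)
    (hymono : ∀ m j : ℕ, 1 ≤ j → j + 1 ≤ m → y m j < y m (j + 1))
    (lam1 : ℕ → ℕ → ℝ)
    (hlam1 : ∀ m i : ℕ, 1 ≤ i → i ≤ m → lam1 m i =
      (a (m + 1) * ((Polynomial.derivative (q m)).eval (y m i)) * ((q (m - 1)).eval (y m i)))⁻¹)
    (n : ℕ) (hn : 2 ≤ n) (j : ℕ) (hj1 : 1 ≤ j) (hj2 : j ≤ n) :
    (q (n - 1)).eval (x n j) ≠ 0 ∧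
    a 1 ^ 2 * ∑ i ∈ Finset.Icc 1 (n - 1), lam1 (n - 1) i / (x n j - y (n - 1) i) ^ 2 =
      a 1 * ((Polynomial.derivative (p n)).eval (x n j)) / (q (n - 1)).eval (x n j) - 1 := by
  obtain ⟨m, rfl⟩ : ∃ m, n = m + 2 := ⟨n - 2, by omega⟩
  rw [show m + 2 - 1 = m + 1 from rfl]
  have hp : IsThreeTermRecurrence_s14 a b p := ⟨hrec0, hrec⟩
  have hq : IsThreeTermRecurrence_s14 (fun k => a (k + 1)) (fun k => b (k + 1)) q := ⟨hqrec0, hqrec⟩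
  have ha : ∀ k, a (k + 1) ≠ 0 := fun k => (hapos _ (by omega)).ne'
  have hp0 : p 0 = 1 := eq_one_of_degree_eq_zero (hdeg 0) (hlead 0) (by simpa using horth 0 0)
  have hpdeg : ∀ k, (p k).natDegree = k := fun k => natDegree_eq_of_degree_eq_some (hdeg k)
  have hqdeg := hq.natDegree_eq (fun k => ha (k + 1)) (by simp [hq0]) (by simp [hq0])
  have hξ : (p (m + 2)).IsRoot (x (m + 2) j) := hxroot _ j hj1 hj2
  have hyinj : Set.InjOn (y (m + 1)) (Icc 1 (m + 1) : Finset ℕ) := by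
    rw [coe_Icc]
    exact (strictMonoOn_of_lt_add_one Set.ordConnected_Icc
      fun i _ hi hi1 => hymono _ i hi.1 hi1.2).injOn
  refine ⟨hp.eval_ne_zero_of_isRoot hq hp0 hq0 (ha 0) hξ, ?_⟩
  rw [← hp.sq_mul_sum_christoffel_div_sq_eq hq ha hp0 hq0 hpdeg hqdeg (by simp) hyinj
    (fun i hi => hyroot _ i (mem_Icc.mp hi).1 (mem_Icc.mp hi).2) hξ]
  refine congrArg _ (sum_congr rfl fun i hi => ?_)
  rw [hlam1 _ i (mem_Icc.mp hi).1 (mem_Icc.mp hi).2]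
  rfl

theorem stmt_14
    (μ : Measure ℝ) [IsProbabilityMeasure μ]
    (lo hi : ℝ)
    (hsupp : μ (Set.Icc lo hi)ᶜ = 0)
    (hinf : ∀ s : Finset ℝ, μ (↑s : Set ℝ)ᶜ ≠ 0)
    (p : ℕ → Polynomial ℝ)
    (hdeg : ∀ m : ℕ, (p m).degree = m)
    (hlead : ∀ m : ℕ, 0 < (p m).leadingCoeff)
    (horth : ∀ m l : ℕ, ∫ t, (p m).eval t * (p l).eval t ∂μ = if m = l then 1 else 0)
    (a b : ℕ → ℝ)
    (hapos : ∀ m : ℕ, 1 ≤ m → 0 < a m)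
    (hrec0 : Polynomial.X * p 0 = Polynomial.C (a 1) * p 1 + Polynomial.C (b 0) * p 0)
    (hrec : ∀ m : ℕ, Polynomial.X * p (m + 1) =
      Polynomial.C (a (m + 2)) * p (m + 2) + Polynomial.C (b (m + 1)) * p (m + 1) +
        Polynomial.C (a (m + 1)) * p m)
    (x : ℕ → ℕ → ℝ)
    (hxroot : ∀ m j : ℕ, 1 ≤ j → j ≤ m → (p m).eval (x m j) = 0)
    (hxmono : ∀ m j : ℕ, 1 ≤ j → j + 1 ≤ m → x m j < x m (j + 1))
    (q : ℕ → Polynomial ℝ)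
    (hq0 : q 0 = 1)
    (hqrec0 : Polynomial.X * q 0 = Polynomial.C (a 2) * q 1 + Polynomial.C (b 1) * q 0)
    (hqrec : ∀ m : ℕ, Polynomial.X * q (m + 1) =
      Polynomial.C (a (m + 3)) * q (m + 2) + Polynomial.C (b (m + 2)) * q (m + 1) +
        Polynomial.C (a (m + 2)) * q m)
    (y : ℕ → ℕ → ℝ)
    (hyroot : ∀ m j : ℕ, 1 ≤ j → j ≤ m → (q m).eval (y m j) = 0)
    (hymono : ∀ m j : ℕ, 1 ≤ j → j + 1 ≤ m → y m j < y m (j + 1))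
    (hxy : ∀ m j : ℕ, 1 ≤ j → j ≤ m → x (m + 1) j < y m j ∧ y m j < x (m + 1) (j + 1))
    (lam1 : ℕ → ℕ → ℝ)
    (hlam1 : ∀ m i : ℕ, 1 ≤ i → i ≤ m → lam1 m i =
      (a (m + 1) * ((Polynomial.derivative (q m)).eval (y m i)) * ((q (m - 1)).eval (y m i)))⁻¹)
    (n : ℕ) (hn : 2 ≤ n) (j : ℕ) (hj1 : 1 ≤ j) (hj2 : j ≤ n) :
    (q (n - 1)).eval (x n j) ≠ 0 ∧
    a 1 ^ 2 * ∑ i ∈ Finset.Icc 1 (n - 1), lam1 (n - 1) i / (x n j - y (n - 1) i) ^ 2 =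
      a 1 * ((Polynomial.derivative (p n)).eval (x n j)) / (q (n - 1)).eval (x n j) - 1 :=
  stmt_14_general μ p hdeg hlead horth a b hapos hrec0 hrec x hxroot q hq0 hqrec0 hqrec y hyroot
    hymono lam1 hlam1 n hn j hj1 hj2
end

section
/- Fix integers n ≥ 2, 2 ≤ k ≤ n, and 1 ≤ j ≤ n, and assume p_{k-1}(x_{j,n}) ≠ 0. Then a_k² Σ_{i=1}^{k-1} λ_{i,k-1} p_k(x_{i,k-1})²/(x_{i,k-1} − x_{j,n})² = (Σ_{i=0}^{k-2} p_i(x_{j,n})²) / p_{k-1}(x_{j,n})². -/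
/-!
Let `K_m(u, v) = ∑_{r < m} p_r(u) p_r(v)` and let `y_1, …, y_m` be the zeros of `p_m`.
The Christoffel–Darboux formula, which follows from the three-term recurrence alone, gives
`(y_i - t) K_m(y_i, t) = a_{m+1} p_{m+1}(y_i) p_m(t)`; in particular `K_m(y_i, y_l) = 0` for
`i ≠ l`. So the square matrix `A = (p_r(y_i))` satisfies `A Aᵀ = diag(1 / λ_i)`, hence
`Aᵀ diag(λ_i) A = 1`, which is the identity `∑ λ_i K_m(y_i, t)² = K_m(t, t)`. Substituting the
Christoffel–Darboux value of `K_m(y_i, t)` gives the theorem with `k = m + 1`.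
-/

open MeasureTheory Polynomial Finset
open scoped Matrix

theorem Matrix.sum_inv_mul_mulVec_sq {ι K : Type*} [Fintype ι] [DecidableEq ι] [Field K]
    {A : Matrix ι ι K} {d : ι → K} (hd : ∀ i, d i ≠ 0) (hA : A * Aᵀ = Matrix.diagonal d)
    (c : ι → K) :
    ∑ i, (d i)⁻¹ * (A *ᵥ c) i ^ 2 = ∑ i, c i ^ 2 := by
  have hleft : Aᵀ * Matrix.diagonal d⁻¹ * A = 1 := by
    rw [Matrix.mul_assoc, mul_eq_one_comm, Matrix.mul_assoc, hA, Matrix.diagonal_mul_diagonal]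
    simp [hd]
  calc ∑ i, (d i)⁻¹ * (A *ᵥ c) i ^ 2 = (A *ᵥ c) ⬝ᵥ (Matrix.diagonal d⁻¹ *ᵥ (A *ᵥ c)) := by
        simp only [dotProduct, Matrix.mulVec_diagonal, Pi.inv_apply]
        exact sum_congr rfl fun i _ => by ring
    _ = c ⬝ᵥ ((Aᵀ * Matrix.diagonal d⁻¹ * A) *ᵥ c) := by
        rw [← Matrix.mulVec_mulVec, ← Matrix.mulVec_mulVec, Matrix.dotProduct_mulVec c,
          Matrix.vecMul_transpose]
    _ = ∑ i, c i ^ 2 := by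
        simp [hleft, dotProduct, sq]

structure ThreeTermRecurrence {R : Type*} [CommRing R] (p : ℕ → R[X]) (a b : ℕ → R) : Prop where
  zero : X * p 0 = C (a 1) * p 1 + C (b 0) * p 0
  succ (m : ℕ) : X * p (m + 1) = C (a (m + 2)) * p (m + 2) + C (b (m + 1)) * p (m + 1) +
    C (a (m + 1)) * p m

def christoffelDarbouxKernel {R : Type*} [CommRing R] (p : ℕ → R[X]) (m : ℕ) (u v : R) : R :=
  ∑ r ∈ range m, (p r).eval u * (p r).eval v

namespace ThreeTermRecurrence

variable {R : Type*} [CommRing R] {p : ℕ → R[X]} {a b : ℕ → R}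

theorem sub_mul_christoffelDarbouxKernel_succ (hp : ThreeTermRecurrence p a b) (m : ℕ)
    (u v : R) :
    (u - v) * christoffelDarbouxKernel p (m + 1) u v =
      a (m + 1) * ((p (m + 1)).eval u * (p m).eval v - (p m).eval u * (p (m + 1)).eval v) := by
  induction m with
  | zero =>
    have heval (w : R) := by simpa using congrArg (eval w) hp.zero
    simp only [christoffelDarbouxKernel, zero_add, sum_range_one]
    linear_combination (p 0).eval v * heval u - (p 0).eval u * heval v
  | succ m ih =>
    have heval (w : R) := by simpa using congrArg (eval w) (hp.succ m)
    rw [christoffelDarbouxKernel, sum_range_succ, mul_add, ← christoffelDarbouxKernel, ih]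
    linear_combination (p (m + 1)).eval v * heval u - (p (m + 1)).eval u * heval v

theorem sub_mul_christoffelDarbouxKernel_of_isRoot (hp : ThreeTermRecurrence p a b) {m : ℕ}
    {u : R} (hu : (p m).IsRoot u) (t : R) :
    (u - t) * christoffelDarbouxKernel p m u t = a (m + 1) * (p (m + 1)).eval u * (p m).eval t := by
  rw [IsRoot.def] at hu
  cases m with
  | zero =>
    have h := congrArg (eval u) hp.zero
    simp only [eval_mul, eval_X, eval_C, eval_add, hu] at h
    simp only [christoffelDarbouxKernel, range_zero, sum_empty]
    linear_combination (p 0).eval t * h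
  | succ m =>
    have h := congrArg (eval u) (hp.succ m)
    simp only [eval_mul, eval_X, eval_C, eval_add, hu] at h
    rw [hp.sub_mul_christoffelDarbouxKernel_succ, hu]
    linear_combination (p (m + 1)).eval t * h

theorem christoffelDarbouxKernel_eq_zero_of_isRoot [IsDomain R] (hp : ThreeTermRecurrence p a b)
    {m : ℕ} {u v : R} (hu : (p m).IsRoot u) (hv : (p m).IsRoot v) (huv : u ≠ v) :
    christoffelDarbouxKernel p m u v = 0 := by
  have h := hp.sub_mul_christoffelDarbouxKernel_of_isRoot hu v
  rw [hv.eq_zero, mul_zero] at h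
  exact (mul_eq_zero.mp h).resolve_left (sub_ne_zero.mpr huv)

end ThreeTermRecurrence

theorem christoffelDarbouxKernel_self_pos {R : Type*} [CommRing R] [LinearOrder R]
    [IsStrictOrderedRing R] {p : ℕ → R[X]} (hp0 : (p 0).degree = 0) {m : ℕ} (hm : m ≠ 0)
    (u : R) :
    0 < christoffelDarbouxKernel p m u u := by
  have hp0u : (p 0).eval u ≠ 0 := by
    rw [eq_C_of_degree_eq_zero hp0, eval_C]
    exact coeff_ne_zero_of_eq_degree hp0
  exact sum_pos' (fun r _ => mul_self_nonneg _)
    ⟨0, mem_range.mpr (Nat.pos_of_ne_zero hm), mul_self_pos.mpr hp0u⟩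

theorem ThreeTermRecurrence.sq_mul_sum_eq_christoffelDarbouxKernel_div_sq {K : Type*} [Field K]
    {p : ℕ → K[X]} {a b : ℕ → K} (hp : ThreeTermRecurrence p a b) {m : ℕ} {y : Fin m → K}
    (hy : Function.Injective y) (hroot : ∀ i, (p m).IsRoot (y i))
    (hd : ∀ i, christoffelDarbouxKernel p m (y i) (y i) ≠ 0) {t : K} (ht : (p m).eval t ≠ 0) :
    a (m + 1) ^ 2 * ∑ i, (christoffelDarbouxKernel p m (y i) (y i))⁻¹ *
        (p (m + 1)).eval (y i) ^ 2 / (y i - t) ^ 2 =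
      christoffelDarbouxKernel p m t t / (p m).eval t ^ 2 := by
  set d := fun i => christoffelDarbouxKernel p m (y i) (y i)
  set A : Matrix (Fin m) (Fin m) K := Matrix.of fun i r => (p r).eval (y i)
  have hkernel (i : Fin m) (v : K) :
      christoffelDarbouxKernel p m (y i) v = (A *ᵥ fun r => (p r).eval v) i := by
    simp [A, Matrix.mulVec, dotProduct, christoffelDarbouxKernel,
      Fin.sum_univ_eq_sum_range (fun r => (p r).eval (y i) * (p r).eval v)]
  have hA : A * Aᵀ = Matrix.diagonal d := by
    ext i l
    have hentry : (A * Aᵀ) i l = christoffelDarbouxKernel p m (y i) (y l) := by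
      simp [A, Matrix.mul_apply, christoffelDarbouxKernel,
        Fin.sum_univ_eq_sum_range (fun r => (p r).eval (y i) * (p r).eval (y l))]
    rw [hentry, Matrix.diagonal_apply]
    split_ifs with h
    · rw [h]
    · exact hp.christoffelDarbouxKernel_eq_zero_of_isRoot (hroot i) (hroot l) (hy.ne h)
  have hterm (i : Fin m) :
      a (m + 1) ^ 2 * ((d i)⁻¹ * (p (m + 1)).eval (y i) ^ 2 / (y i - t) ^ 2) =
        (d i)⁻¹ * christoffelDarbouxKernel p m (y i) t ^ 2 / (p m).eval t ^ 2 := by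
    have hyt : y i - t ≠ 0 := sub_ne_zero.mpr fun h => ht (h ▸ hroot i)
    have h := hp.sub_mul_christoffelDarbouxKernel_of_isRoot (hroot i) t
    rw [mul_div_assoc, mul_div_assoc, mul_left_comm]
    congr 1
    rw [← mul_div_assoc, div_eq_div_iff (pow_ne_zero 2 hyt) (pow_ne_zero 2 ht)]
    linear_combination -(a (m + 1) * (p (m + 1)).eval (y i) * (p m).eval t
      + (y i - t) * christoffelDarbouxKernel p m (y i) t) * h
  rw [mul_sum, sum_congr rfl fun i _ => hterm i, ← sum_div]
  simp only [hkernel]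
  rw [Matrix.sum_inv_mul_mulVec_sq hd hA, christoffelDarbouxKernel,
    ← Fin.sum_univ_eq_sum_range (fun r => (p r).eval t * (p r).eval t)]
  simp only [sq]

theorem stmt_18_general
    (p : ℕ → Polynomial ℝ)
    (hdeg : ∀ m : ℕ, (p m).degree = m)
    (a b : ℕ → ℝ)
    (hrec0 : Polynomial.X * p 0 = Polynomial.C (a 1) * p 1 + Polynomial.C (b 0) * p 0)
    (hrec : ∀ m : ℕ, Polynomial.X * p (m + 1) =
      Polynomial.C (a (m + 2)) * p (m + 2) + Polynomial.C (b (m + 1)) * p (m + 1) +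
        Polynomial.C (a (m + 1)) * p m)
    (x : ℕ → ℕ → ℝ)
    (hxroot : ∀ m j : ℕ, 1 ≤ j → j ≤ m → (p m).eval (x m j) = 0)
    (hxmono : ∀ m j : ℕ, 1 ≤ j → j + 1 ≤ m → x m j < x m (j + 1))
    (lam : ℕ → ℕ → ℝ)
    (hlam : ∀ m j : ℕ, lam m j = (∑ i ∈ Finset.range m, ((p i).eval (x m j)) ^ 2)⁻¹)
    (n k : ℕ)
    (j : ℕ)
    (hpk : (p (k - 1)).eval (x n j) ≠ 0) :
    a k ^ 2 * ∑ i ∈ Finset.Icc 1 (k - 1),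
        lam (k - 1) i * ((p k).eval (x (k - 1) i)) ^ 2 / (x (k - 1) i - x n j) ^ 2 =
      (∑ i ∈ Finset.range (k - 1), ((p i).eval (x n j)) ^ 2) /
        ((p (k - 1)).eval (x n j)) ^ 2 := by
  cases k with
  | zero => simp
  | succ m =>
    rw [Nat.add_sub_cancel] at hpk ⊢
    have hmono : StrictMonoOn (x m) (Set.Icc 1 m) :=
      strictMonoOn_of_lt_add_one Set.ordConnected_Icc fun i _ hi hi1 => hxmono m i hi.1 hi1.2
    have hy : Function.Injective fun i : Fin m => x m (i + 1) := fun i l h =>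
      Fin.ext (Nat.succ_injective (hmono.injOn ⟨by omega, i.2⟩ ⟨by omega, l.2⟩ h))
    have key := ThreeTermRecurrence.sq_mul_sum_eq_christoffelDarbouxKernel_div_sq ⟨hrec0, hrec⟩ hy
      (fun i => hxroot m (i + 1) (by omega) i.2)
      (fun i => (christoffelDarbouxKernel_self_pos (by simpa using hdeg 0) i.pos.ne' _).ne') hpk
    rw [← Ico_add_one_right_eq_Icc, sum_Ico_eq_sum_range, ← Fin.sum_univ_eq_sum_range]
    simpa [hlam, christoffelDarbouxKernel, sq, add_comm] using key

theorem stmt_18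
    (μ : Measure ℝ) [IsProbabilityMeasure μ]
    (lo hi : ℝ)
    (hsupp : μ (Set.Icc lo hi)ᶜ = 0)
    (hinf : ∀ s : Finset ℝ, μ (↑s : Set ℝ)ᶜ ≠ 0)
    (p : ℕ → Polynomial ℝ)
    (hdeg : ∀ m : ℕ, (p m).degree = m)
    (hlead : ∀ m : ℕ, 0 < (p m).leadingCoeff)
    (horth : ∀ m l : ℕ, ∫ t, (p m).eval t * (p l).eval t ∂μ = if m = l then 1 else 0)
    (a b : ℕ → ℝ)
    (hapos : ∀ m : ℕ, 1 ≤ m → 0 < a m)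
    (hrec0 : Polynomial.X * p 0 = Polynomial.C (a 1) * p 1 + Polynomial.C (b 0) * p 0)
    (hrec : ∀ m : ℕ, Polynomial.X * p (m + 1) =
      Polynomial.C (a (m + 2)) * p (m + 2) + Polynomial.C (b (m + 1)) * p (m + 1) +
        Polynomial.C (a (m + 1)) * p m)
    (x : ℕ → ℕ → ℝ)
    (hxroot : ∀ m j : ℕ, 1 ≤ j → j ≤ m → (p m).eval (x m j) = 0)
    (hxmono : ∀ m j : ℕ, 1 ≤ j → j + 1 ≤ m → x m j < x m (j + 1))
    (lam : ℕ → ℕ → ℝ)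
    (hlam : ∀ m j : ℕ, lam m j = (∑ i ∈ Finset.range m, ((p i).eval (x m j)) ^ 2)⁻¹)
    (n k : ℕ) (hn : 2 ≤ n) (hk1 : 2 ≤ k) (hk2 : k ≤ n)
    (j : ℕ) (hj1 : 1 ≤ j) (hj2 : j ≤ n)
    (hpk : (p (k - 1)).eval (x n j) ≠ 0) :
    a k ^ 2 * ∑ i ∈ Finset.Icc 1 (k - 1),
        lam (k - 1) i * ((p k).eval (x (k - 1) i)) ^ 2 / (x (k - 1) i - x n j) ^ 2 =
      (∑ i ∈ Finset.range (k - 1), ((p i).eval (x n j)) ^ 2) /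
        ((p (k - 1)).eval (x n j)) ^ 2 :=
  stmt_18_general p hdeg a b hrec0 hrec x hxroot hxmono lam hlam n k j hpk
end
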